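/- arXiv:2512.05269 — 8 statements merged into one kernel-verified Lean document; each statement's English description precedes it below -/
import Mathlib

section
/- For each natural number n, let a(n) be the number of n×n matrices A with natural-number entries all equal to 0 or 1 (A i j ≤ 1 for all i, j) such that A is nilpotent. Then a(0) = 1 and for every n ≥ 1 one has, as integers, a(n) = ∑_{k=1}^{n} (−1)^{k−1} · C(n,k) · 2^{k(n−k)} · a(n−k), where C(n,k) is the binomial coefficient. -/
/-!
A matrix with entries in `ℕ` is nilpotent iff the digraph of its nonzero entries is acyclic (an
entry of `A ^ m` is nonzero iff there is a walk of length `m`), so `a n` counts the acyclic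
relations on `n` points. A nonempty acyclic relation has a sink, so summing `(-1) ^ #S` over the
sets `S` of sinks of an acyclic relation gives `0`. Exchanging the two sums, the acyclic relations
in which all points of a `k`-set `S` are sinks are an arbitrary choice of the `k * (n - k)` edges
from `Sᶜ` into `S` together with an acyclic relation on `Sᶜ`; this is the recurrence.
-/

open Finset Relation

def IsAcyclic {α : Type*} (r : α → α → Prop) : Prop := ∀ a, ¬ TransGen r a a

theorem Relation.TransGen.subtype {α : Type*} {r : α → α → Prop} {p : α → Prop}
    (hp : ∀ a b, r a b → p a) {a b : α} (hab : TransGen r a b) (ha : p a) (hb : p b) :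
    TransGen (fun x y : Subtype p => r x y) ⟨a, ha⟩ ⟨b, hb⟩ := by
  induction hab with
  | single h => exact .single h
  | @tail c d _ hcd ih => exact (ih (hp c d hcd)).tail hcd

namespace IsAcyclic

variable {α β : Type*} {r : α → α → Prop}

theorem comap (h : IsAcyclic r) (f : β → α) : IsAcyclic fun a b => r (f a) (f b) :=
  fun a hcyc => h (f a) (hcyc.lift f fun _ _ => id)

theorem of_subtype {p : α → Prop} (hp : ∀ a b, r a b → p a)
    (h : IsAcyclic fun x y : Subtype p => r x y) : IsAcyclic r := by
  intro a hcyc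
  obtain ⟨b, hab, -⟩ := TransGen.head'_iff.mp hcyc
  exact h ⟨a, hp a b hab⟩ (hcyc.subtype hp _ _)

theorem exists_forall_not [Finite α] [Nonempty α] (h : IsAcyclic r) : ∃ a, ∀ b, ¬ r a b := by
  have : IsStrictOrder α (flip (TransGen r)) :=
    { irrefl := h, trans := fun _ _ _ hab hbc => hbc.trans hab }
  obtain ⟨a, -, ha⟩ := (Finite.wellFounded_of_trans_of_irrefl (flip (TransGen r))).has_min
    Set.univ Set.univ_nonempty
  exact ⟨a, fun b hab => ha b trivial (.single hab)⟩

theorem exists_rank [Fintype α] (h : IsAcyclic r) :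
    ∃ ρ : α → ℕ, (∀ a, ρ a < Fintype.card α) ∧ ∀ a b, r a b → ρ b < ρ a := by
  classical
  refine ⟨fun a => #{b | TransGen r a b},
    fun a => card_lt_univ_of_notMem (x := a) (by simpa using h a), fun a b hab => card_lt_card ?_⟩
  refine (ssubset_iff_of_subset fun c => ?_).mpr ⟨b, by simpa using .single hab, by simpa using h b⟩
  simpa using TransGen.head hab

end IsAcyclic

namespace Matrix

variable {ι R : Type*} [Semiring R] [PartialOrder R] [CanonicallyOrderedAdd R] [NoZeroDivisors R]

theorem mul_apply_ne_zero_iff {l m n : Type*} [Fintype m] {A : Matrix l m R} {B : Matrix m n R}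
    {i : l} {k : n} : (A * B) i k ≠ 0 ↔ ∃ j, A i j ≠ 0 ∧ B j k ≠ 0 := by
  simp [mul_apply, Finset.sum_eq_zero_iff]

variable [Fintype ι] [DecidableEq ι] {A : Matrix ι ι R}

theorem exists_pow_succ_apply_ne_zero_of_transGen {i j : ι}
    (h : TransGen (fun i j => A i j ≠ 0) i j) : ∃ m, (A ^ (m + 1)) i j ≠ 0 := by
  induction h with
  | single h => exact ⟨0, by simpa using h⟩
  | tail _ hbc ih =>
    obtain ⟨m, hm⟩ := ih
    exact ⟨m + 1, pow_succ A (m + 1) ▸ mul_apply_ne_zero_iff.mpr ⟨_, hm, hbc⟩⟩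

theorem add_le_of_pow_apply_ne_zero {ρ : ι → ℕ} (hρ : ∀ i j, A i j ≠ 0 → ρ j < ρ i) :
    ∀ m i j, (A ^ m) i j ≠ 0 → ρ j + m ≤ ρ i
  | 0, i, j, h => by
    obtain rfl : i = j := by by_contra hij; simp [one_apply_ne hij] at h
    simp
  | m + 1, i, j, h => by
    obtain ⟨k, hik, hkj⟩ := mul_apply_ne_zero_iff.mp (pow_succ A m ▸ h)
    have := add_le_of_pow_apply_ne_zero hρ m i k hik
    have := hρ k j hkj
    omega

theorem isNilpotent_iff_isAcyclic : IsNilpotent A ↔ IsAcyclic fun i j => A i j ≠ 0 := by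
  constructor
  · rintro ⟨N, hN⟩ i hcyc
    obtain ⟨m, hm⟩ := exists_pow_succ_apply_ne_zero_of_transGen hcyc
    have hpow : ∀ k, ((A ^ (m + 1)) ^ (k + 1)) i i ≠ 0 := by
      intro k
      induction k with
      | zero => simpa using hm
      | succ k ih => exact pow_succ (A ^ (m + 1)) (k + 1) ▸ mul_apply_ne_zero_iff.mpr ⟨i, ih, hm⟩
    refine hpow N ?_
    rw [← pow_mul, pow_eq_zero_of_le (by nlinarith) hN, zero_apply]
  · intro h
    obtain ⟨ρ, hρ_lt, hρ⟩ := h.exists_rank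
    refine ⟨Fintype.card ι, ext fun i j => not_not.mp fun hij => ?_⟩
    have := add_le_of_pow_apply_ne_zero hρ _ i j hij
    have := hρ_lt i
    omega

end Matrix

noncomputable def acyclicCount (n : ℕ) : ℕ :=
  Nat.card {r : Fin n → Fin n → Bool // IsAcyclic fun i j => r i j}

theorem acyclicCount_zero : acyclicCount 0 = 1 :=
  Nat.card_eq_one_iff_unique.mpr ⟨inferInstance, ⟨⟨finZeroElim, finZeroElim⟩⟩⟩

theorem card_acyclic_eq_acyclicCount (α : Type*) [Finite α] :
    Nat.card {r : α → α → Bool // IsAcyclic fun a b => r a b} = acyclicCount (Nat.card α) := by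
  let e := Finite.equivFin α
  refine Nat.card_congr (Equiv.subtypeEquiv (e.arrowCongr (e.arrowCongr (.refl Bool))) fun r => ?_)
  refine ⟨fun h => h.comap e.symm, fun h => ?_⟩
  simpa using h.comap e

theorem card_nilpotent_zero_one_eq_card_acyclic (ι : Type*) [Fintype ι] [DecidableEq ι] :
    Nat.card {A : Matrix ι ι ℕ // (∀ i j, A i j ≤ 1) ∧ IsNilpotent A} =
      Nat.card {r : ι → ι → Bool // IsAcyclic fun i j => r i j} := by
  refine Nat.card_congr
    { toFun := fun A => ⟨fun i j => A.1 i j ≠ 0, ?_⟩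
      invFun := fun r => ⟨Matrix.of fun i j => (r.1 i j).toNat, fun i j => Bool.toNat_le _, ?_⟩
      left_inv := fun A => ?_
      right_inv := fun r => ?_ }
  · simpa using Matrix.isNilpotent_iff_isAcyclic.mp A.2.2
  · simpa [Matrix.isNilpotent_iff_isAcyclic] using r.2
  · ext i j
    obtain h | h := Nat.le_one_iff_eq_zero_or_eq_one.mp (A.2.1 i j) <;> simp [h]
  · ext i j
    simp

def acyclicSinksEquiv {α : Type*} [DecidableEq α] (S : Finset α) :
    {r : α → α → Bool // (IsAcyclic fun a b => r a b) ∧ ∀ a ∈ S, ∀ b, r a b = false} ≃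
      ({a // a ∉ S} × {a // a ∈ S} → Bool) ×
        {r : {a // a ∉ S} → {a // a ∉ S} → Bool // IsAcyclic fun a b => r a b} where
  toFun r := (fun p => r.1 p.1 p.2, ⟨fun a b => r.1 a b, r.2.1.comap Subtype.val⟩)
  invFun g := ⟨fun a b => if ha : a ∈ S then false else if hb : b ∈ S then
      g.1 (⟨a, ha⟩, ⟨b, hb⟩) else g.2.1 ⟨a, ha⟩ ⟨b, hb⟩,
    IsAcyclic.of_subtype (p := (· ∉ S)) (fun a b h ha => by simp [ha] at h)
      (by convert g.2.2 using 3 with x y; simp [x.2, y.2]),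
    fun a ha b => by simp [ha]⟩
  left_inv r := by
    ext a b
    by_cases ha : a ∈ S
    · simp [ha, r.2.2 a ha b]
    · by_cases hb : b ∈ S <;> simp [ha, hb]
  right_inv g := by
    ext x y
    · simp [x.1.2, x.2.2]
    · simp [x.2, y.2]

theorem card_acyclic_forall_mem_sink {α : Type*} [Fintype α] [DecidableEq α] (S : Finset α) :
    Nat.card {r : α → α → Bool // (IsAcyclic fun a b => r a b) ∧ ∀ a ∈ S, ∀ b, r a b = false} =
      2 ^ (#S * (Fintype.card α - #S)) * acyclicCount (Fintype.card α - #S) := by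
  have hS : Nat.card {a // a ∉ S} = Fintype.card α - #S := by simp [Fintype.card_subtype_compl]
  rw [Nat.card_congr (acyclicSinksEquiv S), Nat.card_prod, Nat.card_fun, Nat.card_prod,
    card_acyclic_eq_acyclicCount, hS]
  simp [mul_comm]

def sinks {α : Type*} [Fintype α] (r : α → α → Bool) : Finset α := {a | ∀ b, r a b = false}

theorem sum_range_acyclicCount_eq_zero (α : Type*) [Fintype α] [Nonempty α] :
    ∑ k ∈ range (Fintype.card α + 1), (-1 : ℤ) ^ k * (Fintype.card α).choose k *
      2 ^ (k * (Fintype.card α - k)) * acyclicCount (Fintype.card α - k) = 0 := by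
  classical
  let D : Finset (α → α → Bool) := {r | IsAcyclic fun a b => r a b}
  have hcard (S : Finset α) : #{r ∈ D | S ⊆ sinks r} =
      2 ^ (#S * (Fintype.card α - #S)) * acyclicCount (Fintype.card α - #S) := by
    rw [← card_acyclic_forall_mem_sink, Nat.card_eq_fintype_card, Fintype.card_subtype,
      filter_filter]
    congr! 3
    simp [sinks, subset_iff]
  symm
  calc (0 : ℤ) = ∑ r ∈ D, ∑ S ∈ (sinks r).powerset, (-1 : ℤ) ^ #S := by
        refine (sum_eq_zero fun r hr => sum_powerset_neg_one_pow_card_of_nonempty ?_).symm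
        obtain ⟨a, ha⟩ := IsAcyclic.exists_forall_not (mem_filter.mp hr).2
        exact ⟨a, by simpa [sinks] using ha⟩
    _ = ∑ S : Finset α, ∑ r ∈ D with S ⊆ sinks r, (-1 : ℤ) ^ #S :=
        sum_comm' fun r S => by simp [and_comm]
    _ = ∑ S ∈ (univ : Finset α).powerset, (-1 : ℤ) ^ #S *
          (2 ^ (#S * (Fintype.card α - #S)) * acyclicCount (Fintype.card α - #S) : ℕ) := by
        rw [powerset_univ]
        refine sum_congr rfl fun S _ => ?_
        rw [sum_const, hcard, nsmul_eq_mul, mul_comm]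
    _ = _ := by
        rw [sum_powerset_apply_card fun k => (-1 : ℤ) ^ k *
          (2 ^ (k * (Fintype.card α - k)) * acyclicCount (Fintype.card α - k) : ℕ), card_univ]
        refine sum_congr rfl fun k _ => ?_
        push_cast
        ring

theorem acyclicCount_eq_sum_Icc {n : ℕ} (hn : 1 ≤ n) :
    (acyclicCount n : ℤ) = ∑ k ∈ Icc 1 n,
      (-1 : ℤ) ^ (k - 1) * n.choose k * 2 ^ (k * (n - k)) * acyclicCount (n - k) := by
  have : Nonempty (Fin n) := ⟨⟨0, hn⟩⟩
  have h := sum_range_acyclicCount_eq_zero (Fin n)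
  rw [Fintype.card_fin, range_eq_Ico, sum_eq_sum_Ico_succ_bot (by omega), zero_add,
    Ico_add_one_right_eq_Icc] at h
  simp only [pow_zero, Nat.choose_zero_right, zero_mul, Nat.sub_zero, Nat.cast_one, one_mul] at h
  rw [eq_neg_of_add_eq_zero_left h, ← sum_neg_distrib]
  refine sum_congr rfl fun k hk => ?_
  obtain ⟨j, rfl⟩ : ∃ j, k = j + 1 := ⟨k - 1, by grind⟩
  simp [pow_succ]

theorem card_nilpotent_boolean_matrices_recurrence
    (a : ℕ → ℕ)
    (ha : ∀ n, a n =
      Nat.card {A : Matrix (Fin n) (Fin n) ℕ // (∀ i j, A i j ≤ 1) ∧ IsNilpotent A}) :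
    a 0 = 1 ∧
      ∀ n, 1 ≤ n →
        (a n : ℤ) =
          ∑ k ∈ Finset.Icc 1 n,
            (-1 : ℤ) ^ (k - 1) * (n.choose k : ℤ) * 2 ^ (k * (n - k)) * (a (n - k) : ℤ) := by
  have ha' (n : ℕ) : a n = acyclicCount n := by
    rw [ha, card_nilpotent_zero_one_eq_card_acyclic, card_acyclic_eq_acyclicCount, Nat.card_fin]
  simp only [ha']
  exact ⟨acyclicCount_zero, fun n hn => acyclicCount_eq_sum_Icc hn⟩
end

section
/- Let m, n ≥ 1 be natural numbers. The number of pairs (f, g) with f : Fin m → Fin n and g : Fin n → Fin m such that the pair is eventually constant equals m^{n−1} · n^{m−1} · (m + n − 1). That is, the cardinality of the set of pairs (f, g) for which there exists k > 0 and a point c : Fin m with (g ∘ f)^[k] x = c for all x : Fin m, equals m^{n−1} · n^{m−1} · (m+n−1). -/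
open Function Sum

namespace ECP


noncomputable def nfind {p : ℕ → Prop} (H : ∃ k, p k) : ℕ :=
  @Nat.find p (Classical.decPred p) H

theorem nfind_spec {p : ℕ → Prop} (H : ∃ k, p k) : p (nfind H) :=
  @Nat.find_spec p (Classical.decPred p) H

theorem nfind_min {p : ℕ → Prop} (H : ∃ k, p k) {j : ℕ} (hj : j < nfind H) : ¬ p j :=
  @Nat.find_min p (Classical.decPred p) H _ hj

theorem nfind_le {p : ℕ → Prop} (H : ∃ k, p k) {i : ℕ} (hi : p i) : nfind H ≤ i :=
  @Nat.find_min' p (Classical.decPred p) H _ hi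

theorem nfind_eq {p : ℕ → Prop} (H : ∃ k, p k) {i : ℕ} (hi : p i)
    (hmin : ∀ j < i, ¬ p j) : nfind H = i := by
  have h1 : nfind H ≤ i := by
    by_contra hc
    exact nfind_min H (Nat.lt_of_not_le hc) hi
  rcases Nat.lt_or_ge (nfind H) i with h | h
  · exact absurd (nfind_spec H) (hmin _ h)
  · omega

section generic

variable {α : Type*} {h : α → α} {r v w : α}

theorem iter_stay (hr : h r = r) {k : ℕ} (hk : h^[k] v = r) {j : ℕ} (hj : k ≤ j) :
    h^[j] v = r := by
  obtain ⟨t, rfl⟩ := Nat.exists_eq_add_of_le hj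
  rw [Nat.add_comm, iterate_add_apply, hk, iterate_fixed hr]

/-- periodic point -/
def Per (h : α → α) (w : α) : Prop := ∃ p, 0 < p ∧ h^[p] w = w

theorem Per.mult {p : ℕ} (hp : h^[p] w = w) : ∀ t, h^[t * p] w = w := by
  intro t
  induction t with
  | zero => simp
  | succ t ih => rw [Nat.succ_mul, iterate_add_apply, hp, ih]

theorem Per.iter (hw : Per h w) (j : ℕ) : Per h (h^[j] w) := by
  obtain ⟨p, hp, hpw⟩ := hw
  refine ⟨p, hp, ?_⟩
  rw [← iterate_add_apply, Nat.add_comm, iterate_add_apply, hpw]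

/-- a periodic point that reaches a fixed point is that fixed point -/
theorem Per.eq_fixed (hw : Per h w) (hr : h r = r) {k : ℕ} (hk : h^[k] w = r) : w = r := by
  obtain ⟨p, hp, hpw⟩ := hw
  have h1 : h^[p * (k + 1)] w = w := by
    have := Per.mult hpw (k + 1)
    rwa [Nat.mul_comm] at this
  have h2 : k ≤ p * (k + 1) := by nlinarith
  have := iter_stay hr hk h2
  rw [h1] at this
  exact this

/-- cancellation among periodic points -/
theorem Per.cancel (h1 : Per h v) (h2 : Per h w) {s : ℕ} (hs : h^[s] v = h^[s] w) : v = w := by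
  obtain ⟨p, hp, hpv⟩ := h1
  obtain ⟨q, hq, hqw⟩ := h2
  have hv : h^[p * q * (s + 1)] v = v := by
    rw [show p * q * (s+1) = q * (s+1) * p by ring]; exact Per.mult hpv _
  have hw : h^[p * q * (s + 1)] w = w := by
    rw [show p * q * (s+1) = p * (s+1) * q by ring]; exact Per.mult hqw _
  have hpq : 0 < p * q := Nat.mul_pos hp hq
  have hles : s ≤ p * q * (s + 1) := by nlinarith
  obtain ⟨t, ht⟩ := Nat.exists_eq_add_of_le hles
  have ht' : p * q * (s + 1) = t + s := by omega
  rw [ht', iterate_add_apply] at hv hw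
  rw [hs] at hv
  exact hv.symm.trans hw

theorem exists_reach_per [Finite α] (h : α → α) (v : α) : ∃ k, Per h (h^[k] v) := by
  obtain ⟨i, j, hne, heq⟩ := Finite.exists_ne_map_eq_of_infinite (fun i : ℕ => h^[i] v)
  rcases Nat.lt_or_ge i j with hij | hij
  · refine ⟨i, j - i, by omega, ?_⟩
    rw [← iterate_add_apply, Nat.sub_add_cancel hij.le]
    exact heq.symm
  · have hji : j < i := by omega
    refine ⟨j, i - j, by omega, ?_⟩
    rw [← iterate_add_apply, Nat.sub_add_cancel hji.le]
    exact heq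

/-- injectivity along a path before the first hit -/
theorem path_inj {D : ℕ} (hD : h^[D] v = r) (hmin : ∀ j < D, h^[j] v ≠ r)
    {i j : ℕ} (hi : i ≤ D) (hj : j ≤ D) (hij : h^[i] v = h^[j] v) : i = j := by
  -- wlog i < j
  have key : ∀ i j : ℕ, i < j → j ≤ D → h^[i] v = h^[j] v → False := by
    intro i j hlt hjD heq
    have hper : Per h (h^[i] v) := ⟨j - i, by omega, by
      rw [← iterate_add_apply, Nat.sub_add_cancel (by omega : i ≤ j)]; exact heq.symm⟩
    have hreach : h^[D - i] (h^[i] v) = r := by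
      rw [← iterate_add_apply, Nat.sub_add_cancel (by omega : i ≤ D)]; exact hD
    set d := j - i with hd
    have hd0 : 0 < d := by omega
    have hbase : h^[d] (h^[i] v) = h^[i] v := by
      rw [← iterate_add_apply, Nat.sub_add_cancel (by omega : i ≤ j)]; exact heq.symm
    set q := D - i with hq
    have hqd : d ≤ q := by omega
    have hmod : h^[q % d + i] v = r := by
      have hmult : h^[(q / d) * d] (h^[i] v) = h^[i] v := Per.mult hbase _
      have e1 : h^[q % d + (q / d) * d + i] v = h^[q % d + i] v := by
        rw [iterate_add_apply, iterate_add_apply, iterate_add_apply]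
        rw [show h^[q/d*d] (h^[i] v) = h^[i] v from hmult]
      have e2 : q % d + q / d * d + i = D := by
        have h1 := Nat.mod_add_div q d
        have h2 : q / d * d = d * (q / d) := Nat.mul_comm _ _
        omega
      rw [e2] at e1
      rw [hD] at e1
      exact e1.symm
    have hlt : q % d + i < D := by
      have := Nat.mod_lt q hd0
      omega
    exact hmin _ hlt hmod
  rcases Nat.lt_trichotomy i j with hc | hc | hc
  · exact absurd (key i j hc hj hij) not_false
  · exact hc
  · exact absurd (key j i hc hi hij.symm) not_false

end generic
section generic
variable {α : Type*}


open scoped Classical in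
noncomputable def reroot (h : α → α) (u : α) (D : ℕ) : α → α :=
  fun w => if hw : ∃ i, i ≤ D ∧ h^[i] u = w then
    (if nfind hw = 0 then u else h^[nfind hw - 1] u) else h w

variable {h : α → α} {u r : α} {D : ℕ}

theorem reroot_path (hD : h^[D] u = r) (hmin : ∀ j < D, h^[j] u ≠ r) {i : ℕ} (hi : i ≤ D) :
    reroot h u D (h^[i] u) = if i = 0 then u else h^[i-1] u := by
  have hw : ∃ j, j ≤ D ∧ h^[j] u = h^[i] u := ⟨i, hi, rfl⟩
  have hfind : nfind hw = i := by
    have h1 : nfind hw ≤ i := nfind_le hw ⟨hi, rfl⟩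
    have h2 := nfind_spec hw
    exact path_inj hD hmin (le_trans h1 hi) hi h2.2
  simp only [reroot]
  rw [dif_pos hw, hfind]

theorem reroot_off {w : α} (hw : ¬ ∃ i, i ≤ D ∧ h^[i] u = w) : reroot h u D w = h w := by
  simp only [reroot]
  rw [dif_neg hw]

theorem reroot_self (hD : h^[D] u = r) (hmin : ∀ j < D, h^[j] u ≠ r) :
    reroot h u D u = u := by
  have := reroot_path (h := h) hD hmin (Nat.zero_le D)
  simpa using this

theorem reroot_chain (hD : h^[D] u = r) (hmin : ∀ j < D, h^[j] u ≠ r) :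
    ∀ i ≤ D, (reroot h u D)^[i] (h^[i] u) = u := by
  intro i
  induction i with
  | zero => intro; rfl
  | succ i ih =>
    intro hi
    rw [iterate_succ_apply, reroot_path hD hmin hi]
    simp only [Nat.succ_ne_zero, if_false, Nat.add_sub_cancel]
    exact ih (by omega)

theorem reroot_newpath (hD : h^[D] u = r) (hmin : ∀ j < D, h^[j] u ≠ r) :
    ∀ j ≤ D, (reroot h u D)^[j] r = h^[D - j] u := by
  intro j
  induction j with
  | zero => intro; simpa using hD.symm
  | succ j ih =>
    intro hj
    rw [iterate_succ_apply', ih (by omega), reroot_path hD hmin (by omega)]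
    have hDj : D - j ≠ 0 := by omega
    rw [if_neg hDj, show D - j - 1 = D - (j+1) by omega]

theorem reroot_newD (hD : h^[D] u = r) (hmin : ∀ j < D, h^[j] u ≠ r) :
    (reroot h u D)^[D] r = u := by
  have := reroot_newpath hD hmin D le_rfl
  simpa using this

theorem reroot_newmin (hD : h^[D] u = r) (hmin : ∀ j < D, h^[j] u ≠ r) :
    ∀ j < D, (reroot h u D)^[j] r ≠ u := by
  intro j hj hc
  rw [reroot_newpath hD hmin j hj.le] at hc
  have : D - j = 0 := path_inj hD hmin (by omega) (Nat.zero_le D) (by simpa using hc)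
  omega

theorem reroot_conv (hD : h^[D] u = r) (hmin : ∀ j < D, h^[j] u ≠ r) (hfix : h r = r)
    (hall : ∀ v, ∃ k, h^[k] v = r) : ∀ v, ∃ k, (reroot h u D)^[k] v = u := by
  have main : ∀ N : ℕ, ∀ v : α, nfind (hall v) ≤ N → ∃ k, (reroot h u D)^[k] v = u := by
    intro N
    induction N with
    | zero =>
      intro v hv
      -- nfind = 0 means v = r
      have h0 : h^[0] v = r := by
        have := nfind_spec (hall v)
        rwa [Nat.le_zero.mp hv] at this
      simp only [iterate_zero, id] at h0
      subst h0
      exact ⟨D, reroot_newD hD hmin⟩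
    | succ N ih =>
      intro v hv
      by_cases hp : ∃ i, i ≤ D ∧ h^[i] u = v
      · obtain ⟨i, hi, rfl⟩ := hp
        exact ⟨i, reroot_chain hD hmin i hi⟩
      · have hvr : v ≠ r := by
          rintro rfl
          exact hp ⟨D, le_rfl, hD⟩
        have hfind0 : nfind (hall v) ≠ 0 := by
          intro hc
          have := nfind_spec (hall v)
          rw [hc] at this
          exact hvr this
        have hstep : nfind (hall (h v)) < nfind (hall v) := by
          have hsp := nfind_spec (hall v)
          have h3 : h^[nfind (hall v) - 1] (h v) = r := by
            have h2 := hsp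
            rw [show nfind (hall v) = (nfind (hall v) - 1) + 1 by omega,
              iterate_succ_apply] at h2
            exact h2
          have := nfind_le (hall (h v)) h3
          omega
        obtain ⟨k, hk⟩ := ih (h v) (by omega)
        refine ⟨k + 1, ?_⟩
        rw [iterate_add_apply]
        simp only [iterate_one]
        rw [reroot_off hp]
        exact hk
  intro v
  exact main (nfind (hall v)) v le_rfl

theorem reroot_reroot (hD : h^[D] u = r) (hmin : ∀ j < D, h^[j] u ≠ r) (hfix : h r = r) :
    reroot (reroot h u D) r D = h := by
  funext w
  have hD2 := reroot_newD hD hmin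
  have hmin2 := reroot_newmin hD hmin
  by_cases hp : ∃ i, i ≤ D ∧ h^[i] u = w
  · obtain ⟨i, hi, rfl⟩ := hp
    have hw2 : (reroot h u D)^[D - i] r = h^[i] u := by
      rw [reroot_newpath hD hmin (D - i) (by omega)]
      congr 1
      omega
    rw [← hw2, reroot_path hD2 hmin2 (by omega : D - i ≤ D), hw2]
    by_cases hiD : i = D
    · have h0 : D - i = 0 := by omega
      rw [if_pos h0, hiD, hD, hfix]
    · have hne : D - i ≠ 0 := by omega
      rw [if_neg hne, reroot_newpath hD hmin (D - i - 1) (by omega),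
        ← iterate_succ_apply' h i u]
      congr 1
      omega
  · have hp2 : ¬ ∃ j, j ≤ D ∧ (reroot h u D)^[j] r = w := by
      rintro ⟨j, hj, rfl⟩
      exact hp ⟨D - j, by omega, (reroot_newpath hD hmin j hj).symm⟩
    rw [reroot_off hp2, reroot_off hp]

end generic

section generic
variable {α : Type*}

theorem agree_until {A : Set α} {h₁ h₂ : α → α} (hA : ∀ w, w ∉ A → h₂ w = h₁ w) {v : α} {k : ℕ}
    (hk : ∀ j < k, h₁^[j] v ∉ A) : h₂^[k] v = h₁^[k] v := by
  induction k with
  | zero => rfl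
  | succ k ih =>
    rw [iterate_succ_apply', iterate_succ_apply',
      ih (fun j hj => hk j (by omega)), hA _ (hk k (by omega))]

end generic

variable {m n : ℕ}

@[simp] def glD (x₀ : Fin m) (v : Fin m ⊕ Fin n) : Fin m := v.getLeft?.getD x₀
@[simp] def grD (y₀ : Fin n) (v : Fin m ⊕ Fin n) : Fin n := v.getRight?.getD y₀

theorem eq_inr_grD {v : Fin m ⊕ Fin n} (y₀ : Fin n) (hv : v.isLeft = false) :
    v = inr (grD y₀ v) := by
  cases v with
  | inl x => simp at hv
  | inr y => simp

theorem eq_inl_glD {v : Fin m ⊕ Fin n} (x₀ : Fin m) (hv : v.isLeft = true) :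
    v = inl (glD x₀ v) := by
  cases v with
  | inl x => simp
  | inr y => simp at hv

def flips (h : Fin m ⊕ Fin n → Fin m ⊕ Fin n) (v : Fin m ⊕ Fin n) : Prop :=
  (h v).isLeft = !v.isLeft

theorem side_iter {h : Fin m ⊕ Fin n → Fin m ⊕ Fin n} {v : Fin m ⊕ Fin n} {k : ℕ}
    (hf : ∀ j < k, flips h (h^[j] v)) :
    (h^[k] v).isLeft = (if Even k then v.isLeft else !v.isLeft) := by
  induction k with
  | zero => simp
  | succ k ih =>
    rw [iterate_succ_apply']
    have h1 : flips h (h^[k] v) := hf k (by omega)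
    rw [flips] at h1
    rw [h1, ih (fun j hj => hf j (by omega))]
    by_cases hk : Even k
    · simp [hk, Nat.even_add_one]
    · simp [hk, Nat.even_add_one]

/-- bipartite rooted structure: root `inr y₀` is a fixed point, everything else flips sides -/
def BR (y₀ : Fin n) (h : Fin m ⊕ Fin n → Fin m ⊕ Fin n) : Prop :=
  (∀ v, v ≠ inr y₀ → flips h v) ∧ h (inr y₀) = inr y₀

/-- tree rooted at `inr y₀` -/
def Tr (y₀ : Fin n) (h : Fin m ⊕ Fin n → Fin m ⊕ Fin n) : Prop :=
  BR y₀ h ∧ ∀ v, ∃ k, h^[k] v = inr y₀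

/-- eventually constant structure -/
def Ep (h : Fin m ⊕ Fin n → Fin m ⊕ Fin n) : Prop :=
  (∀ v, flips h v) ∧ ∃ c : Fin m, h (h (inl c)) = inl c ∧ ∀ v, ∃ k, h^[k] v = inl c

/-- the easy counting equivalence -/
noncomputable def eq4 (x₀ : Fin m) (y₀ : Fin n) :
    {h : Fin m ⊕ Fin n → Fin m ⊕ Fin n // BR y₀ h} ≃
      (Fin m → Fin n) × ({y : Fin n // y ≠ y₀} → Fin m) where
  toFun h := (fun x => grD y₀ (h.1 (inl x)),
              fun y => glD x₀ (h.1 (inr y.1)))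
  invFun fg := ⟨fun v => match v with
      | inl x => inr (fg.1 x)
      | inr y => if hy : y = y₀ then inr y₀ else inl (fg.2 ⟨y, hy⟩), by
    constructor
    · rintro (x | y) hv
      · simp [flips]
      · have : y ≠ y₀ := fun hc => hv (by rw [hc])
        simp [flips, this]
    · simp⟩
  left_inv := by
    rintro ⟨h, hBR, hroot⟩
    apply Subtype.ext
    funext v
    match v with
    | inl x =>
      have hf := hBR (inl x) (by simp)
      rw [flips] at hf
      simp only at hf ⊢
      exact (eq_inr_grD y₀ (by simpa using hf)).symm
    | inr y =>
      by_cases hy : y = y₀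
      · subst hy; simpa using hroot.symm
      · have hf := hBR (inr y) (by simp [hy])
        rw [flips] at hf
        simp only [hy, dif_neg, not_false_iff] at *
        exact (eq_inl_glD _ (by simpa using hf)).symm
  right_inv := by
    rintro ⟨f, g⟩
    refine Prod.ext ?_ ?_
    · funext x; simp
    · funext y
      have : y.1 ≠ y₀ := y.2
      simp [this]

section generic
variable {α : Type*} {h : α → α} {v w r : α}

theorem Per.reach_back (hw : Per h w) {k : ℕ} {w' : α} (hk : h^[k] w = w') :
    ∃ k', h^[k'] w' = w := by
  obtain ⟨p, hp, hpw⟩ := hw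
  refine ⟨p * (k + 1) - k, ?_⟩
  rw [← hk, ← iterate_add_apply]
  have hge : k ≤ p * (k + 1) := by nlinarith
  have : p * (k + 1) - k + k = p * (k + 1) := by omega
  rw [this, show p * (k+1) = (k+1) * p by ring]
  exact Per.mult hpw _

theorem per2_mod (h2 : h^[2] w = w) (k : ℕ) : h^[k] w = h^[k % 2] w := by
  conv_lhs => rw [show k = k % 2 + (k / 2) * 2 by omega]
  rw [iterate_add_apply, Per.mult h2]

theorem reach_update [DecidableEq α] {a b : α} (hr : ∃ k, h^[k] v = a) :
    ∃ k, (Function.update h a b)^[k] v = a := by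
  classical
  let K := Nat.find hr
  have hK : h^[K] v = a := Nat.find_spec hr
  have hmin : ∀ j < K, h^[j] v ≠ a := fun j hj => Nat.find_min hr hj
  refine ⟨K, ?_⟩
  have : (Function.update h a b)^[K] v = h^[K] v := by
    apply agree_until (A := {a})
    · intro w hw
      exact Function.update_of_ne hw b h
    · intro j hj
      exact hmin j hj
  rw [this, hK]

end generic


section EqB
variable {m n : ℕ}

theorem reroot_flips {h : Fin m ⊕ Fin n → Fin m ⊕ Fin n} {u r : Fin m ⊕ Fin n} {D : ℕ}
    (hD : h^[D] u = r) (hmin : ∀ j < D, h^[j] u ≠ r) (hfl : ∀ v, v ≠ r → flips h v) :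
    ∀ v, v ≠ u → flips (reroot h u D) v := by
  intro v hv
  by_cases hp : ∃ i, i ≤ D ∧ h^[i] u = v
  · obtain ⟨i, hi, rfl⟩ := hp
    have hi0 : i ≠ 0 := by rintro rfl; exact hv rfl
    rw [flips, reroot_path hD hmin hi, if_neg hi0]
    have hprev : h^[i-1] u ≠ r := hmin _ (by omega)
    have hthis := hfl _ hprev
    rw [flips] at hthis
    have hrw : h (h^[i-1] u) = h^[i] u := by
      conv_rhs => rw [show i = (i-1)+1 by omega]
      rw [iterate_succ_apply']
    rw [hrw] at hthis
    rw [hthis, Bool.not_not]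
  · have hvr : v ≠ r := by rintro rfl; exact hp ⟨D, le_rfl, hD⟩
    rw [flips, reroot_off hp]
    exact hfl v hvr

theorem Ep_unique {h : Fin m ⊕ Fin n → Fin m ⊕ Fin n} (hfl : ∀ v, flips h v)
    {c c' : Fin m} (h2' : h (h (inl c')) = inl c')
    (hcv : ∀ v, ∃ k, h^[k] v = inl c) : c' = c := by
  obtain ⟨k, hk⟩ := hcv (inl c')
  have h2'' : h^[2] (inl c') = inl c' := by
    rw [show (2:ℕ) = 1 + 1 by rfl, iterate_add_apply]; simpa using h2'
  rw [per2_mod h2'' k] at hk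
  have hk2 : k % 2 = 0 ∨ k % 2 = 1 := by omega
  rcases hk2 with h0 | h1
  · rw [h0] at hk; simpa using hk
  · rw [h1] at hk
    have := hfl (inl c')
    rw [flips] at this
    simp only [iterate_one] at hk
    rw [hk] at this
    simp at this

variable (x₀ : Fin m) (y₀ : Fin n)

noncomputable def sinkc (h : Fin m ⊕ Fin n → Fin m ⊕ Fin n) (hEp : Ep h) : Fin m :=
  Classical.choose hEp.2

theorem sinkc_spec (h : Fin m ⊕ Fin n → Fin m ⊕ Fin n) (hEp : Ep h) :
    h (h (inl (sinkc h hEp))) = inl (sinkc h hEp) ∧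
      ∀ v, ∃ k, h^[k] v = inl (sinkc h hEp) :=
  Classical.choose_spec hEp.2

noncomputable def dOf (h : Fin m ⊕ Fin n → Fin m ⊕ Fin n) (hEp : Ep h) : Fin n :=
  grD y₀ (h (inl (sinkc h hEp)))

theorem dOf_spec (h : Fin m ⊕ Fin n → Fin m ⊕ Fin n) (hEp : Ep h) :
    h (inl (sinkc h hEp)) = inr (dOf y₀ h hEp) := by
  have := hEp.1 (inl (sinkc h hEp))
  rw [flips] at this
  exact eq_inr_grD y₀ (by simpa using this)

noncomputable def hTOf (h : Fin m ⊕ Fin n → Fin m ⊕ Fin n) (hEp : Ep h) :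
    Fin m ⊕ Fin n → Fin m ⊕ Fin n :=
  Function.update h (inr (dOf y₀ h hEp)) (inr (dOf y₀ h hEp))

theorem hTOf_conv (h : Fin m ⊕ Fin n → Fin m ⊕ Fin n) (hEp : Ep h) :
    ∀ v, ∃ k, (hTOf y₀ h hEp)^[k] v = inr (dOf y₀ h hEp) := by
  intro v
  apply reach_update
  obtain ⟨k, hk⟩ := (sinkc_spec h hEp).2 v
  refine ⟨k + 1, ?_⟩
  rw [iterate_succ_apply', hk, dOf_spec y₀ h hEp]

theorem hTOf_BR (h : Fin m ⊕ Fin n → Fin m ⊕ Fin n) (hEp : Ep h) :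
    BR (dOf y₀ h hEp) (hTOf y₀ h hEp) := by
  constructor
  · intro v hv
    rw [flips, hTOf, Function.update_of_ne hv]
    exact hEp.1 v
  · rw [hTOf, Function.update_self]

noncomputable def DOf (h : Fin m ⊕ Fin n → Fin m ⊕ Fin n) (hEp : Ep h) : ℕ :=
  nfind (hTOf_conv y₀ h hEp (inr y₀))

theorem DOf_spec (h : Fin m ⊕ Fin n → Fin m ⊕ Fin n) (hEp : Ep h) :
    (hTOf y₀ h hEp)^[DOf y₀ h hEp] (inr y₀) = inr (dOf y₀ h hEp) :=
  nfind_spec (hTOf_conv y₀ h hEp (inr y₀))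

theorem DOf_min (h : Fin m ⊕ Fin n → Fin m ⊕ Fin n) (hEp : Ep h) :
    ∀ j < DOf y₀ h hEp, (hTOf y₀ h hEp)^[j] (inr y₀) ≠ inr (dOf y₀ h hEp) :=
  fun _ hj => nfind_min (hTOf_conv y₀ h hEp (inr y₀)) hj

noncomputable def h0Of (h : Fin m ⊕ Fin n → Fin m ⊕ Fin n) (hEp : Ep h) :
    Fin m ⊕ Fin n → Fin m ⊕ Fin n :=
  reroot (hTOf y₀ h hEp) (inr y₀) (DOf y₀ h hEp)

theorem h0Of_Tr (h : Fin m ⊕ Fin n → Fin m ⊕ Fin n) (hEp : Ep h) :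
    Tr y₀ (h0Of y₀ h hEp) := by
  refine ⟨⟨?_, ?_⟩, ?_⟩
  · exact reroot_flips (DOf_spec y₀ h hEp) (DOf_min y₀ h hEp) (hTOf_BR y₀ h hEp).1
  · exact reroot_self (DOf_spec y₀ h hEp) (DOf_min y₀ h hEp)
  · exact reroot_conv (DOf_spec y₀ h hEp) (DOf_min y₀ h hEp) (hTOf_BR y₀ h hEp).2
      (hTOf_conv y₀ h hEp)

theorem h0Of_claim (h : Fin m ⊕ Fin n → Fin m ⊕ Fin n) (hEp : Ep h) :
    h0Of y₀ h hEp (inl (sinkc h hEp)) = inr (dOf y₀ h hEp) ∨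
      (h0Of y₀ h hEp (inr (dOf y₀ h hEp)) = inl (sinkc h hEp) ∧ dOf y₀ h hEp ≠ y₀) := by
  set c := sinkc h hEp
  set d := dOf y₀ h hEp with hdd
  set hT := hTOf y₀ h hEp with hhT
  set D := DOf y₀ h hEp
  have hD := DOf_spec y₀ h hEp
  have hmin := DOf_min y₀ h hEp
  have hTc : hT (inl c) = inr d := by
    rw [hhT, hTOf, Function.update_of_ne (by simp), dOf_spec y₀ h hEp]
  by_cases hp : ∃ i, i ≤ D ∧ hT^[i] (inr y₀) = inl c
  · right
    obtain ⟨i, hi, hpi⟩ := hp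
    have hiD : i ≠ D := by
      intro hc; rw [hc, hD] at hpi; exact absurd hpi (by simp)
    have hstep : hT^[i+1] (inr y₀) = inr d := by
      rw [iterate_succ_apply', hpi, hTc]
    have hi1 : i + 1 = D := by
      by_contra hc
      exact hmin (i+1) (by omega) hstep
    constructor
    · have : inr d = hT^[D] (inr y₀) := hD.symm
      rw [this, h0Of, reroot_path hD hmin le_rfl]
      have hD0 : D ≠ 0 := by omega
      rw [if_neg hD0, show D - 1 = i by omega, hpi]
    · intro hc
      have : D = 0 := by
        have h0 : hT^[0] (inr y₀) = inr d := by simp [hc]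
        by_contra hD0
        exact hmin 0 (by omega) h0
      omega
  · left
    rw [h0Of, reroot_off hp, hTc]

noncomputable def mkOf (h : Fin m ⊕ Fin n → Fin m ⊕ Fin n) (hEp : Ep h) : Fin m ⊕ Fin n :=
  if h0Of y₀ h hEp (inl (sinkc h hEp)) = inr (dOf y₀ h hEp) then inl (sinkc h hEp)
  else inr (dOf y₀ h hEp)

theorem mkOf_ne (h : Fin m ⊕ Fin n → Fin m ⊕ Fin n) (hEp : Ep h) :
    mkOf y₀ h hEp ≠ inr y₀ := by
  rw [mkOf]
  split
  · simp
  · rename_i hne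
    rcases h0Of_claim y₀ h hEp with hc | hc
    · exact absurd hc hne
    · simpa using hc.2

end EqB


section EqB2
variable {m n : ℕ} (x₀ : Fin m) (y₀ : Fin n)

def cOf (t : Fin m ⊕ Fin n → Fin m ⊕ Fin n) : Fin m ⊕ Fin n → Fin m
  | inl x => x
  | inr y => glD x₀ (t (inr y))

def dBOf (t : Fin m ⊕ Fin n → Fin m ⊕ Fin n) : Fin m ⊕ Fin n → Fin n
  | inl x => grD y₀ (t (inl x))
  | inr y => y

theorem bwd_cd {t : Fin m ⊕ Fin n → Fin m ⊕ Fin n} (htr : Tr y₀ t) {v : Fin m ⊕ Fin n}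
    (hv : v ≠ inr y₀) :
    t (inl (cOf x₀ t v)) = inr (dBOf y₀ t v) ∨
      (t (inr (dBOf y₀ t v)) = inl (cOf x₀ t v) ∧ dBOf y₀ t v ≠ y₀) := by
  cases v with
  | inl x =>
    left
    have := htr.1.1 (inl x) (by simp)
    rw [flips] at this
    exact eq_inr_grD y₀ (by simpa [cOf] using this)
  | inr y =>
    right
    have hy : y ≠ y₀ := fun hc => hv (by rw [hc])
    have := htr.1.1 (inr y) (by simp [hy])
    rw [flips] at this
    exact ⟨(eq_inl_glD x₀ (by simpa using this)).symm ▸ rfl, hy⟩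

noncomputable def DB (t : Fin m ⊕ Fin n → Fin m ⊕ Fin n)
    (htr : ∀ w, ∃ k, t^[k] w = inr y₀) (d : Fin n) : ℕ :=
  nfind (htr (inr d))

theorem DB_spec (t : Fin m ⊕ Fin n → Fin m ⊕ Fin n) (htr : ∀ w, ∃ k, t^[k] w = inr y₀)
    (d : Fin n) : t^[DB y₀ t htr d] (inr d) = inr y₀ := nfind_spec (htr (inr d))

theorem DB_min (t : Fin m ⊕ Fin n → Fin m ⊕ Fin n) (htr : ∀ w, ∃ k, t^[k] w = inr y₀)
    (d : Fin n) : ∀ j < DB y₀ t htr d, t^[j] (inr d) ≠ inr y₀ :=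
  fun _ hj => nfind_min (htr (inr d)) hj

noncomputable def hTB (t : Fin m ⊕ Fin n → Fin m ⊕ Fin n)
    (htr : ∀ w, ∃ k, t^[k] w = inr y₀) (v : Fin m ⊕ Fin n) : Fin m ⊕ Fin n → Fin m ⊕ Fin n :=
  reroot t (inr (dBOf y₀ t v)) (DB y₀ t htr (dBOf y₀ t v))

noncomputable def bwdB (t : Fin m ⊕ Fin n → Fin m ⊕ Fin n)
    (htr : ∀ w, ∃ k, t^[k] w = inr y₀) (v : Fin m ⊕ Fin n) : Fin m ⊕ Fin n → Fin m ⊕ Fin n :=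
  Function.update (hTB y₀ t htr v) (inr (dBOf y₀ t v)) (inl (cOf x₀ t v))

theorem hTB_Tr {t : Fin m ⊕ Fin n → Fin m ⊕ Fin n} (htr : Tr y₀ t) (v : Fin m ⊕ Fin n) :
    Tr (dBOf y₀ t v) (hTB y₀ t htr.2 v) := by
  refine ⟨⟨?_, ?_⟩, ?_⟩
  · exact reroot_flips (DB_spec y₀ t htr.2 _) (DB_min y₀ t htr.2 _) htr.1.1
  · exact reroot_self (DB_spec y₀ t htr.2 _) (DB_min y₀ t htr.2 _)
  · exact reroot_conv (DB_spec y₀ t htr.2 _) (DB_min y₀ t htr.2 _) htr.1.2 htr.2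

theorem key_edge {t : Fin m ⊕ Fin n → Fin m ⊕ Fin n} (htr : Tr y₀ t) {v : Fin m ⊕ Fin n}
    (hv : v ≠ inr y₀) :
    hTB y₀ t htr.2 v (inl (cOf x₀ t v)) = inr (dBOf y₀ t v) := by
  set c := cOf x₀ t v
  set d := dBOf y₀ t v
  have hD := DB_spec y₀ t htr.2 d
  have hmin := DB_min y₀ t htr.2 d
  rcases bwd_cd x₀ y₀ htr hv with hcase | ⟨hcase, hdy⟩
  · -- t (inl c) = inr d ; inl c is not on the path from inr d to the root
    have hoff : ¬ ∃ i, i ≤ DB y₀ t htr.2 d ∧ t^[i] (inr d) = inl c := by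
      rintro ⟨i, hi, hpi⟩
      have hiD : i ≠ DB y₀ t htr.2 d := by
        intro hc; rw [hc, hD] at hpi; exact absurd hpi (by simp)
      have hstep : t^[i+1] (inr d) = inr d := by
        rw [iterate_succ_apply', hpi, hcase]
      have := path_inj hD hmin (i := i+1) (j := 0) (by omega) (Nat.zero_le _) (by simpa using hstep)
      omega
    rw [hTB, reroot_off hoff, hcase]
  · -- t (inr d) = inl c ; inl c is the point at index 1 on the path
    have hD1 : 1 ≤ DB y₀ t htr.2 d := by
      by_contra hc
      have h0 : DB y₀ t htr.2 d = 0 := by omega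
      rw [h0] at hD
      simp only [iterate_zero, id] at hD
      exact hdy (by injection hD)
    have h1 : t^[1] (inr d) = inl c := by simpa using hcase
    rw [hTB, ← h1, reroot_path hD hmin hD1]
    simp

theorem bwdB_2cyc {t : Fin m ⊕ Fin n → Fin m ⊕ Fin n} (htr : Tr y₀ t) {v : Fin m ⊕ Fin n}
    (hv : v ≠ inr y₀) :
    bwdB x₀ y₀ t htr.2 v (inl (cOf x₀ t v)) = inr (dBOf y₀ t v) ∧
      bwdB x₀ y₀ t htr.2 v (inr (dBOf y₀ t v)) = inl (cOf x₀ t v) := by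
  constructor
  · rw [bwdB, Function.update_of_ne (by simp)]
    exact key_edge x₀ y₀ htr hv
  · rw [bwdB, Function.update_self]

theorem bwdB_conv {t : Fin m ⊕ Fin n → Fin m ⊕ Fin n} (htr : Tr y₀ t) {v : Fin m ⊕ Fin n}
    (hv : v ≠ inr y₀) :
    ∀ w, ∃ k, (bwdB x₀ y₀ t htr.2 v)^[k] w = inl (cOf x₀ t v) := by
  intro w
  have h1 : ∃ k, (bwdB x₀ y₀ t htr.2 v)^[k] w = inr (dBOf y₀ t v) := by
    rw [bwdB]
    exact reach_update ((hTB_Tr y₀ htr v).2 w)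
  obtain ⟨k, hk⟩ := h1
  refine ⟨k + 1, ?_⟩
  rw [iterate_succ_apply', hk]
  exact (bwdB_2cyc x₀ y₀ htr hv).2

theorem bwdB_Ep {t : Fin m ⊕ Fin n → Fin m ⊕ Fin n} (htr : Tr y₀ t) {v : Fin m ⊕ Fin n}
    (hv : v ≠ inr y₀) : Ep (bwdB x₀ y₀ t htr.2 v) := by
  constructor
  · intro w
    by_cases hw : w = inr (dBOf y₀ t v)
    · subst hw
      rw [flips, bwdB, Function.update_self]
      simp
    · rw [flips, bwdB, Function.update_of_ne hw]
      exact (hTB_Tr y₀ htr v).1.1 w hw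
  · refine ⟨cOf x₀ t v, ?_, bwdB_conv x₀ y₀ htr hv⟩
    rw [(bwdB_2cyc x₀ y₀ htr hv).1]
    exact (bwdB_2cyc x₀ y₀ htr hv).2

end EqB2


section EqBRT
variable {m n : ℕ} (x₀ : Fin m) (y₀ : Fin n)

theorem rtB1 {h : Fin m ⊕ Fin n → Fin m ⊕ Fin n} (hEp : Ep h) :
    bwdB x₀ y₀ (h0Of y₀ h hEp) (h0Of_Tr y₀ h hEp).2 (mkOf y₀ h hEp) = h := by
  have hD := DOf_spec y₀ h hEp
  have hmin := DOf_min y₀ h hEp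
  have hfixT : hTOf y₀ h hEp (inr (dOf y₀ h hEp)) = inr (dOf y₀ h hEp) :=
    (hTOf_BR y₀ h hEp).2
  -- the marker determines (c, d)
  have hcd : cOf x₀ (h0Of y₀ h hEp) (mkOf y₀ h hEp) = sinkc h hEp ∧
      dBOf y₀ (h0Of y₀ h hEp) (mkOf y₀ h hEp) = dOf y₀ h hEp := by
    by_cases hgood : h0Of y₀ h hEp (inl (sinkc h hEp)) = inr (dOf y₀ h hEp)
    · rw [mkOf, if_pos hgood]
      refine ⟨rfl, ?_⟩
      show grD y₀ (h0Of y₀ h hEp (inl (sinkc h hEp))) = dOf y₀ h hEp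
      rw [hgood]; simp
    · rw [mkOf, if_neg hgood]
      rcases h0Of_claim y₀ h hEp with hcl | ⟨hcl, _⟩
      · exact absurd hcl hgood
      · refine ⟨?_, rfl⟩
        show glD x₀ (h0Of y₀ h hEp (inr (dOf y₀ h hEp))) = sinkc h hEp
        rw [hcl]; simp
  -- new hitting time back to the old root equals D
  have hnewD : (h0Of y₀ h hEp)^[DOf y₀ h hEp] (inr (dOf y₀ h hEp)) = inr y₀ :=
    reroot_newD hD hmin
  have hnewmin : ∀ j < DOf y₀ h hEp, (h0Of y₀ h hEp)^[j] (inr (dOf y₀ h hEp)) ≠ inr y₀ :=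
    reroot_newmin hD hmin
  have hDB : DB y₀ (h0Of y₀ h hEp) (h0Of_Tr y₀ h hEp).2 (dOf y₀ h hEp) = DOf y₀ h hEp :=
    nfind_eq _ hnewD hnewmin
  have hcyc : h (inr (dOf y₀ h hEp)) = inl (sinkc h hEp) := by
    have h2 := (sinkc_spec h hEp).1
    rw [dOf_spec y₀ h hEp] at h2
    exact h2
  rw [bwdB, hcd.1, hcd.2, hTB, hcd.2, hDB, h0Of, reroot_reroot hD hmin hfixT, hTOf,
    Function.update_idem, ← hcyc, Function.update_eq_self]

theorem rtB2 {t : Fin m ⊕ Fin n → Fin m ⊕ Fin n} (htr : Tr y₀ t) {v : Fin m ⊕ Fin n}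
    (hv : v ≠ inr y₀) :
    h0Of y₀ (bwdB x₀ y₀ t htr.2 v) (bwdB_Ep x₀ y₀ htr hv) = t ∧
      mkOf y₀ (bwdB x₀ y₀ t htr.2 v) (bwdB_Ep x₀ y₀ htr hv) = v := by
  set hE := bwdB x₀ y₀ t htr.2 v with hhE
  have hEp' : Ep hE := bwdB_Ep x₀ y₀ htr hv
  have h2cyc := bwdB_2cyc x₀ y₀ htr hv
  have hsc : sinkc hE hEp' = cOf x₀ t v :=
    Ep_unique hEp'.1 (sinkc_spec hE hEp').1 (bwdB_conv x₀ y₀ htr hv)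
  have hdc : dOf y₀ hE hEp' = dBOf y₀ t v := by
    rw [dOf, hsc, hhE, h2cyc.1]; simp
  have hTBfix : hTB y₀ t htr.2 v (inr (dBOf y₀ t v)) = inr (dBOf y₀ t v) :=
    reroot_self (DB_spec y₀ t htr.2 _) (DB_min y₀ t htr.2 _)
  have hT1 : hTOf y₀ hE hEp' = hTB y₀ t htr.2 v := by
    rw [hTOf, hdc, hhE, bwdB, Function.update_idem]
    funext w
    by_cases hw : w = inr (dBOf y₀ t v)
    · rw [hw, Function.update_self, hTBfix]
    · rw [Function.update_of_ne hw]
  have hDspec : (hTB y₀ t htr.2 v)^[DB y₀ t htr.2 (dBOf y₀ t v)] (inr y₀) =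
      inr (dBOf y₀ t v) :=
    reroot_newD (DB_spec y₀ t htr.2 _) (DB_min y₀ t htr.2 _)
  have hDmin : ∀ j < DB y₀ t htr.2 (dBOf y₀ t v),
      (hTB y₀ t htr.2 v)^[j] (inr y₀) ≠ inr (dBOf y₀ t v) :=
    reroot_newmin (DB_spec y₀ t htr.2 _) (DB_min y₀ t htr.2 _)
  have hD2 : DOf y₀ hE hEp' = DB y₀ t htr.2 (dBOf y₀ t v) := by
    apply nfind_eq
    · rw [hT1, hdc]; exact hDspec
    · intro j hj
      rw [hT1, hdc]; exact hDmin j hj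
  have hmain : h0Of y₀ hE hEp' = t := by
    rw [h0Of, hT1, hD2]
    exact reroot_reroot (DB_spec y₀ t htr.2 _) (DB_min y₀ t htr.2 _) htr.1.2
  refine ⟨hmain, ?_⟩
  rw [mkOf, hmain, hsc, hdc]
  cases v with
  | inl x =>
    have hcase : t (inl (cOf x₀ t (inl x))) = inr (dBOf y₀ t (inl x)) := by
      have := htr.1.1 (inl x) (by simp)
      rw [flips] at this
      exact eq_inr_grD y₀ (by simpa [cOf] using this)
    rw [if_pos hcase]
    rfl
  | inr y =>
    have hy : y ≠ y₀ := fun hc => hv (by rw [hc])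
    have hcase : t (inr (dBOf y₀ t (inr y))) = inl (cOf x₀ t (inr y)) := by
      have := htr.1.1 (inr y) (by simp [hy])
      rw [flips] at this
      exact (eq_inl_glD x₀ (by simpa [dBOf] using this))
    have hneg : ¬ t (inl (cOf x₀ t (inr y))) = inr (dBOf y₀ t (inr y)) := by
      intro hpos
      have hper : Per t (inl (cOf x₀ t (inr y))) := by
        refine ⟨2, by omega, ?_⟩
        rw [show (2:ℕ) = 1 + 1 by rfl, iterate_add_apply]
        simp only [iterate_one]
        rw [hpos, hcase]
      obtain ⟨k, hk⟩ := htr.2 (inl (cOf x₀ t (inr y)))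
      have := Per.eq_fixed hper htr.1.2 hk
      simp at this
    rw [if_neg hneg]
    rfl

noncomputable def eqB :
    {h : Fin m ⊕ Fin n → Fin m ⊕ Fin n // Ep h} ≃
      {h : Fin m ⊕ Fin n → Fin m ⊕ Fin n // Tr y₀ h} ×
        {v : Fin m ⊕ Fin n // v ≠ inr y₀} where
  toFun hh := (⟨h0Of y₀ hh.1 hh.2, h0Of_Tr y₀ hh.1 hh.2⟩,
               ⟨mkOf y₀ hh.1 hh.2, mkOf_ne y₀ hh.1 hh.2⟩)
  invFun tv := ⟨bwdB x₀ y₀ tv.1.1 tv.1.2.2 tv.2.1, bwdB_Ep x₀ y₀ tv.1.2 tv.2.2⟩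
  left_inv hh := by
    apply Subtype.ext
    exact rtB1 x₀ y₀ hh.2
  right_inv tv := by
    obtain ⟨⟨t, htr⟩, ⟨v, hv⟩⟩ := tv
    have := rtB2 x₀ y₀ htr hv
    simp only [Prod.mk.injEq]
    exact ⟨Subtype.ext this.1, Subtype.ext this.2⟩

end EqBRT


section EqE
variable {m n : ℕ} (x₀ : Fin m) (y₀ : Fin n)

def comb (f : Fin m → Fin n) (g : Fin n → Fin m) : Fin m ⊕ Fin n → Fin m ⊕ Fin n :=
  Sum.elim (fun x => inr (f x)) (fun y => inl (g y))

theorem comb_flips (f : Fin m → Fin n) (g : Fin n → Fin m) : ∀ v, flips (comb f g) v := by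
  rintro (x | y) <;> simp [flips, comb]

theorem comb_iter_even (f : Fin m → Fin n) (g : Fin n → Fin m) (j : ℕ) (x : Fin m) :
    (comb f g)^[2*j] (inl x) = inl ((g ∘ f)^[j] x) := by
  induction j generalizing x with
  | zero => simp
  | succ j ih =>
    rw [show 2*(j+1) = 2*j + 2 by ring, iterate_add_apply]
    rw [show (comb f g)^[2] (inl x) = inl ((g ∘ f) x) from rfl]
    rw [ih, iterate_succ_apply]

theorem cond_iff (f : Fin m → Fin n) (g : Fin n → Fin m) :
    (∃ k > 0, ∃ c : Fin m, ∀ x : Fin m, (g ∘ f)^[k] x = c) ↔ Ep (comb f g) := by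
  constructor
  · rintro ⟨k, hk, c, hc⟩
    refine ⟨comb_flips f g, c, ?_, ?_⟩
    · have hfix : (g ∘ f) c = c := by
        have h1 : (g ∘ f)^[k+1] c = (g ∘ f) c := by
          rw [iterate_succ_apply', hc c]
        have h2 : (g ∘ f)^[k+1] c = c := by
          rw [iterate_succ_apply, hc ((g∘f) c)]
        rw [← h1, h2]
      have := comb_iter_even f g 1 c
      simp only [Nat.mul_one, iterate_one] at this
      rw [show (comb f g) ((comb f g) (inl c)) = (comb f g)^[2] (inl c) from rfl, this, hfix]
    · intro v
      match v with
      | inl x =>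
        exact ⟨2*k, by rw [comb_iter_even, hc]⟩
      | inr y =>
        refine ⟨2*k + 1, ?_⟩
        rw [show 2*k+1 = 2*k + 1 from rfl, iterate_add_apply]
        simp only [iterate_one]
        rw [show (comb f g) (inr y) = inl (g y) from rfl, comb_iter_even, hc]
  · rintro ⟨hfl, c, h2, hcv⟩
    have hfix : (g ∘ f) c = c := by
      have := comb_iter_even f g 1 c
      simp only [Nat.mul_one, iterate_one] at this
      rw [show (comb f g) ((comb f g) (inl c)) = (comb f g)^[2] (inl c) from rfl, this] at h2
      injection h2
    -- for each x, an even hitting time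
    have key : ∀ x : Fin m, ∃ j, (g ∘ f)^[j] x = c := by
      intro x
      obtain ⟨k, hk⟩ := hcv (inl x)
      have hside := side_iter (h := comb f g) (v := inl x) (k := k)
        (fun j _ => comb_flips f g _)
      rw [hk] at hside
      simp only [isLeft_inl] at hside
      have heven : Even k := by
        by_contra hodd
        rw [if_neg hodd] at hside
        simp at hside
      obtain ⟨j, hj⟩ := heven
      refine ⟨j, ?_⟩
      have := comb_iter_even f g j x
      rw [show 2*j = k by omega, hk] at this
      injection this.symm
    classical
    set K := (Finset.univ.sup fun x : Fin m => nfind (key x)) + 1 with hK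
    refine ⟨K, by omega, c, ?_⟩
    intro x
    have hjx : nfind (key x) ≤ K - 1 := by
      have h2 : (fun x : Fin m => nfind (key x)) x ≤ Finset.univ.sup fun x : Fin m => nfind (key x) :=
        Finset.le_sup (s := Finset.univ) (f := fun x : Fin m => nfind (key x)) (Finset.mem_univ x)
      simp only at h2
      omega
    have hx := nfind_spec (key x)
    calc (g ∘ f)^[K] x = (g ∘ f)^[K - nfind (key x)] ((g ∘ f)^[nfind (key x)] x) := by
          rw [← iterate_add_apply]
          congr 1
          omega
      _ = c := by rw [hx]; exact iterate_fixed hfix _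

noncomputable def eqE :
    {fg : (Fin m → Fin n) × (Fin n → Fin m) //
        ∃ k > 0, ∃ c : Fin m, ∀ x : Fin m, (fg.2 ∘ fg.1)^[k] x = c} ≃
      {h : Fin m ⊕ Fin n → Fin m ⊕ Fin n // Ep h} where
  toFun fg := ⟨comb fg.1.1 fg.1.2, (cond_iff fg.1.1 fg.1.2).mp fg.2⟩
  invFun hh := ⟨(fun x => grD y₀ (hh.1 (inl x)), fun y => glD x₀ (hh.1 (inr y))), by
    have hext : comb (fun x => grD y₀ (hh.1 (inl x))) (fun y => glD x₀ (hh.1 (inr y))) = hh.1 := by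
      funext v
      match v with
      | inl x =>
        have := hh.2.1 (inl x)
        rw [flips] at this
        exact (eq_inr_grD y₀ (by simpa using this)).symm
      | inr y =>
        have := hh.2.1 (inr y)
        rw [flips] at this
        exact (eq_inl_glD x₀ (by simpa using this)).symm
    apply (cond_iff _ _).mpr
    rw [hext]
    exact hh.2⟩
  left_inv fg := by
    apply Subtype.ext
    simp only [comb]
    exact Prod.ext (by funext x; simp) (by funext y; simp)
  right_inv hh := by
    apply Subtype.ext
    funext v
    match v with
    | inl x =>
      have := hh.2.1 (inl x)
      rw [flips] at this
      exact (eq_inr_grD y₀ (by simpa using this)).symm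
    | inr y =>
      have := hh.2.1 (inr y)
      rw [flips] at this
      exact (eq_inl_glD x₀ (by simpa using this)).symm

end EqE



section EqA1
variable {m n : ℕ} (x₀ : Fin m) (y₀ : Fin n)

open scoped Classical in
noncomputable def perY (h : Fin m ⊕ Fin n → Fin m ⊕ Fin n) : Finset (Fin n) :=
  Finset.univ.filter (fun y => y ≠ y₀ ∧ Per h (inr y))

theorem mem_perY {h : Fin m ⊕ Fin n → Fin m ⊕ Fin n} {y : Fin n} :
    y ∈ perY y₀ h ↔ y ≠ y₀ ∧ Per h (inr y) := by
  classical
  simp [perY]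

noncomputable def LY (h : Fin m ⊕ Fin n → Fin m ⊕ Fin n) : List (Fin n) :=
  (perY y₀ h).sort (· ≤ ·)

noncomputable def lenY (h : Fin m ⊕ Fin n → Fin m ⊕ Fin n) : ℕ := (LY y₀ h).length

def ψf (h : Fin m ⊕ Fin n → Fin m ⊕ Fin n) (y : Fin n) : Fin n := grD y₀ (h (h (inr y)))

variable {h : Fin m ⊕ Fin n → Fin m ⊕ Fin n}

theorem psi_step (hb : BR y₀ h) {y : Fin n} (hy : y ≠ y₀) :
    h (h (inr y)) = inr (ψf y₀ h y) := by
  have h1 := hb.1 (inr y) (by simp [hy])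
  rw [flips] at h1
  have hleft : (h (h (inr y))).isLeft = false := by
    cases hx : h (inr y) with
    | inl x' =>
      have h3 := hb.1 (inl x') (by simp)
      rw [flips] at h3
      simpa using h3
    | inr y' => simp [hx] at h1
  exact eq_inr_grD y₀ hleft

theorem iter_two (v : Fin m ⊕ Fin n) : h^[2] v = h (h v) := by
  rw [show (2:ℕ) = 1 + 1 from rfl, iterate_add_apply]; rfl

theorem perY_closed (hb : BR y₀ h) {y : Fin n} (hy : y ∈ perY y₀ h) :
    ψf y₀ h y ∈ perY y₀ h := by
  obtain ⟨hy0, hPer⟩ := (mem_perY y₀).mp hy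
  have hstep : h^[2] (inr y) = inr (ψf y₀ h y) := by
    rw [iter_two]; exact psi_step y₀ hb hy0
  rw [mem_perY]
  constructor
  · intro hc
    have : (inr y : Fin m ⊕ Fin n) = inr y₀ := by
      apply Per.eq_fixed hPer hb.2
      rw [hstep, hc]
    exact hy0 (by injection this)
  · have := Per.iter hPer 2
    rwa [hstep] at this

theorem psi_injOn (hb : BR y₀ h) {y₁ y₂ : Fin n} (h₁ : y₁ ∈ perY y₀ h) (h₂ : y₂ ∈ perY y₀ h)
    (heq : ψf y₀ h y₁ = ψf y₀ h y₂) : y₁ = y₂ := by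
  obtain ⟨hy1, hP1⟩ := (mem_perY y₀).mp h₁
  obtain ⟨hy2, hP2⟩ := (mem_perY y₀).mp h₂
  have e1 : h^[2] (inr y₁) = h^[2] (inr y₂) := by
    rw [iter_two, iter_two, psi_step y₀ hb hy1, psi_step y₀ hb hy2, heq]
  have := Per.cancel hP1 hP2 e1
  injection this

theorem psi_image (hb : BR y₀ h) : (perY y₀ h).image (ψf y₀ h) = perY y₀ h := by
  apply Finset.eq_of_subset_of_card_le
  · intro y hy
    obtain ⟨y', hy', rfl⟩ := Finset.mem_image.mp hy
    exact perY_closed y₀ hb hy'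
  · rw [Finset.card_image_of_injOn (fun a ha b hb' hab => psi_injOn y₀ hb ha hb' hab)]

noncomputable def oT (h : Fin m ⊕ Fin n → Fin m ⊕ Fin n) (i : ℕ) : Fin n :=
  ψf y₀ h ((LY y₀ h).getD i y₀)

noncomputable def sX (h : Fin m ⊕ Fin n → Fin m ⊕ Fin n) (i : ℕ) : Fin m :=
  glD x₀ (h (inr (oT y₀ h i)))

theorem nth_mem {i : ℕ} (hi : i < lenY y₀ h) : (LY y₀ h).getD i y₀ ∈ perY y₀ h := by
  rw [List.getD_eq_getElem _ _ hi]
  have hmem : (LY y₀ h)[i] ∈ LY y₀ h := List.getElem_mem hi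
  rwa [← Finset.mem_sort (α := Fin n) (· ≤ ·)]

theorem nth_inj {i j : ℕ} (hi : i < lenY y₀ h) (hj : j < lenY y₀ h)
    (heq : (LY y₀ h).getD i y₀ = (LY y₀ h).getD j y₀) : i = j := by
  rw [List.getD_eq_getElem _ _ hi, List.getD_eq_getElem _ _ hj] at heq
  have hnd : (LY y₀ h).Nodup := (perY y₀ h).sort_nodup (· ≤ ·)
  exact (List.Nodup.getElem_inj_iff hnd).mp heq

theorem nth_indexOf {y : Fin n} (hy : y ∈ perY y₀ h) :
    (LY y₀ h).idxOf y < lenY y₀ h ∧ (LY y₀ h).getD ((LY y₀ h).idxOf y) y₀ = y := by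
  have hmem : y ∈ LY y₀ h := (Finset.mem_sort (α := Fin n) (· ≤ ·)).mpr hy
  have hlt : (LY y₀ h).idxOf y < lenY y₀ h := List.idxOf_lt_length_iff.mpr hmem
  refine ⟨hlt, ?_⟩
  rw [List.getD_eq_getElem _ _ hlt]
  exact List.getElem_idxOf hlt

theorem oT_mem {i : ℕ} (hi : i < lenY y₀ h) (hb : BR y₀ h) : oT y₀ h i ∈ perY y₀ h :=
  perY_closed y₀ hb (nth_mem y₀ hi)

theorem oT_inj (hb : BR y₀ h) {i j : ℕ} (hi : i < lenY y₀ h) (hj : j < lenY y₀ h)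
    (heq : oT y₀ h i = oT y₀ h j) : i = j :=
  nth_inj y₀ hi hj (psi_injOn y₀ hb (nth_mem y₀ hi) (nth_mem y₀ hj) heq)

theorem oT_surj (hb : BR y₀ h) {y : Fin n} (hy : y ∈ perY y₀ h) :
    ∃ i < lenY y₀ h, oT y₀ h i = y := by
  have : y ∈ (perY y₀ h).image (ψf y₀ h) := by rw [psi_image y₀ hb]; exact hy
  obtain ⟨y', hy', hyy⟩ := Finset.mem_image.mp this
  obtain ⟨hlt, hgd⟩ := nth_indexOf y₀ hy'
  exact ⟨(LY y₀ h).idxOf y', hlt, by rw [oT, hgd, hyy]⟩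

theorem sX_spec (hb : BR y₀ h) {i : ℕ} (hi : i < lenY y₀ h) :
    h (inr (oT y₀ h i)) = inl (sX x₀ y₀ h i) := by
  have hmem := oT_mem y₀ hi hb
  have hne : oT y₀ h i ≠ y₀ := ((mem_perY y₀).mp hmem).1
  have h1 := hb.1 (inr (oT y₀ h i)) (by simp [hne])
  rw [flips] at h1
  exact eq_inl_glD x₀ (by simpa using h1)

theorem sX_inj (hb : BR y₀ h) {i j : ℕ} (hi : i < lenY y₀ h) (hj : j < lenY y₀ h)
    (heq : sX x₀ y₀ h i = sX x₀ y₀ h j) : i = j := by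
  apply oT_inj y₀ hb hi hj
  have hP1 : Per h (inr (oT y₀ h i)) := ((mem_perY y₀).mp (oT_mem y₀ hi hb)).2
  have hP2 : Per h (inr (oT y₀ h j)) := ((mem_perY y₀).mp (oT_mem y₀ hj hb)).2
  have e1 : h^[1] (inr (oT y₀ h i)) = h^[1] (inr (oT y₀ h j)) := by
    simp only [iterate_one]
    rw [sX_spec x₀ y₀ hb hi, sX_spec x₀ y₀ hb hj, heq]
  have := Per.cancel hP1 hP2 e1
  injection this

theorem fS_spec (hb : BR y₀ h) {i : ℕ} (hi : i < lenY y₀ h) :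
    h (inl (sX x₀ y₀ h i)) = inr (ψf y₀ h (oT y₀ h i)) := by
  have h2 := psi_step y₀ hb (((mem_perY y₀).mp (oT_mem y₀ hi hb)).1)
  rw [sX_spec x₀ y₀ hb hi] at h2
  exact h2

theorem psi_oT (hb : BR y₀ h) {i : ℕ} (hi : i < lenY y₀ h) :
    ψf y₀ h (oT y₀ h i) = oT y₀ h ((LY y₀ h).idxOf (oT y₀ h i)) := by
  obtain ⟨hlt, hgd⟩ := nth_indexOf y₀ (oT_mem y₀ hi hb)
  conv_rhs => rw [oT, hgd]

theorem rank_lt (hb : BR y₀ h) {i : ℕ} (hi : i < lenY y₀ h) :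
    (LY y₀ h).idxOf (oT y₀ h i) < lenY y₀ h :=
  (nth_indexOf y₀ (oT_mem y₀ hi hb)).1

end EqA1


section EqA2
variable {m n : ℕ} (x₀ : Fin m) (y₀ : Fin n)

noncomputable def fwdA (h : Fin m ⊕ Fin n → Fin m ⊕ Fin n) :
    Fin m ⊕ Fin n → Fin m ⊕ Fin n := fun v => match v with
  | inl x => if hx : ∃ i, i < lenY y₀ h ∧ sX x₀ y₀ h i = x then
      (if nfind hx + 1 < lenY y₀ h then inr (oT y₀ h (nfind hx + 1)) else inr y₀)
    else h (inl x)
  | inr y => h (inr y)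

variable {h : Fin m ⊕ Fin n → Fin m ⊕ Fin n}

theorem fwdA_inr (y : Fin n) : fwdA x₀ y₀ h (inr y) = h (inr y) := rfl

theorem fwdA_inl_off {x : Fin m} (hx : ¬ ∃ i, i < lenY y₀ h ∧ sX x₀ y₀ h i = x) :
    fwdA x₀ y₀ h (inl x) = h (inl x) := by
  simp only [fwdA]
  rw [dif_neg hx]

theorem fwdA_inl_mem (hb : BR y₀ h) {i : ℕ} (hi : i < lenY y₀ h) :
    fwdA x₀ y₀ h (inl (sX x₀ y₀ h i)) =
      if i + 1 < lenY y₀ h then inr (oT y₀ h (i+1)) else inr y₀ := by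
  have hx : ∃ j, j < lenY y₀ h ∧ sX x₀ y₀ h j = sX x₀ y₀ h i := ⟨i, hi, rfl⟩
  have hfind : nfind hx = i := by
    apply nfind_eq hx ⟨hi, rfl⟩
    intro j hj ⟨hj1, hj2⟩
    exact absurd (sX_inj x₀ y₀ hb hj1 hi hj2) (by omega)
  simp only [fwdA]
  rw [dif_pos hx, hfind]

theorem fwdA_BR (hb : BR y₀ h) : BR y₀ (fwdA x₀ y₀ h) := by
  constructor
  · rintro (x | y) hv
    · rw [flips]
      simp only [fwdA]
      split
      · split <;> simp
      · have := hb.1 (inl x) (by simp)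
        rw [flips] at this
        exact this
    · rw [flips, fwdA_inr]
      exact hb.1 (inr y) hv
  · rw [fwdA_inr, hb.2]

theorem chainA (hb : BR y₀ h) : ∀ i, i < lenY y₀ h →
    ∃ k, (fwdA x₀ y₀ h)^[k] (inl (sX x₀ y₀ h i)) = inr y₀ := by
  have main : ∀ d i, i < lenY y₀ h → lenY y₀ h - i ≤ d →
      ∃ k, (fwdA x₀ y₀ h)^[k] (inl (sX x₀ y₀ h i)) = inr y₀ := by
    intro d
    induction d with
    | zero => intro i hi hle; omega
    | succ d ih =>
      intro i hi hle
      by_cases hnext : i + 1 < lenY y₀ h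
      · obtain ⟨k, hk⟩ := ih (i+1) hnext (by omega)
        refine ⟨k + 2, ?_⟩
        rw [iterate_add_apply]
        have e2 : (fwdA x₀ y₀ h)^[2] (inl (sX x₀ y₀ h i)) = inl (sX x₀ y₀ h (i+1)) := by
          rw [iter_two, fwdA_inl_mem x₀ y₀ hb hi, if_pos hnext, fwdA_inr,
            sX_spec x₀ y₀ hb hnext]
        rw [e2, hk]
      · refine ⟨1, ?_⟩
        simp only [iterate_one]
        rw [fwdA_inl_mem x₀ y₀ hb hi, if_neg hnext]
  intro i hi
  exact main (lenY y₀ h - i) i hi le_rfl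

theorem fwdA_agree : ∀ w, ¬ (∃ i, i < lenY y₀ h ∧ w = inl (sX x₀ y₀ h i)) →
    fwdA x₀ y₀ h w = h w := by
  rintro (x | y) hw
  · apply fwdA_inl_off
    rintro ⟨i, hi, rfl⟩
    exact hw ⟨i, hi, rfl⟩
  · rfl

theorem perA_reach (hb : BR y₀ h) (v : Fin m ⊕ Fin n) :
    ∃ k, (∃ i, i < lenY y₀ h ∧ h^[k] v = inl (sX x₀ y₀ h i)) ∨ h^[k] v = inr y₀ := by
  obtain ⟨k, hPer⟩ := exists_reach_per h v
  cases hw : h^[k] v with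
  | inr y =>
    by_cases hy : y = y₀
    · exact ⟨k, Or.inr (by rw [hw, hy])⟩
    · have hmem : y ∈ perY y₀ h := (mem_perY y₀).mpr ⟨hy, hw ▸ hPer⟩
      obtain ⟨i, hi, hoT⟩ := oT_surj y₀ hb hmem
      refine ⟨k + 1, Or.inl ⟨i, hi, ?_⟩⟩
      rw [iterate_succ_apply', hw, ← hoT, sX_spec x₀ y₀ hb hi]
  | inl x =>
    have hP1 : Per h (h (inl x)) := by
      have := Per.iter (hw ▸ hPer) 1
      simpa using this
    have hfl := hb.1 (inl x) (by simp)
    rw [flips] at hfl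
    have hshape : h (inl x) = inr (grD y₀ (h (inl x))) := eq_inr_grD y₀ (by simpa using hfl)
    have hy : grD y₀ (h (inl x)) ≠ y₀ := by
      intro hc
      have hreach : h^[1] (inl x) = inr y₀ := by
        simp only [iterate_one]
        rw [hshape, hc]
      have := Per.eq_fixed (hw ▸ hPer) hb.2 hreach
      simp at this
    have hmem : grD y₀ (h (inl x)) ∈ perY y₀ h :=
      (mem_perY y₀).mpr ⟨hy, hshape ▸ hP1⟩
    obtain ⟨i, hi, hoT⟩ := oT_surj y₀ hb hmem
    refine ⟨k + 2, Or.inl ⟨i, hi, ?_⟩⟩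
    rw [show k + 2 = (k + 1) + 1 by rfl, iterate_succ_apply', iterate_succ_apply', hw,
      hshape, ← hoT, sX_spec x₀ y₀ hb hi]

theorem fwdA_conv (hb : BR y₀ h) : ∀ v, ∃ k, (fwdA x₀ y₀ h)^[k] v = inr y₀ := by
  intro v
  have hex := perA_reach x₀ y₀ hb v
  set Q : ℕ → Prop := fun k =>
    (∃ i, i < lenY y₀ h ∧ h^[k] v = inl (sX x₀ y₀ h i)) ∨ h^[k] v = inr y₀ with hQ
  have hexQ : ∃ k, Q k := hex
  set K := nfind hexQ with hK
  have hspec : Q K := nfind_spec hexQ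
  have hagree : (fwdA x₀ y₀ h)^[K] v = h^[K] v := by
    apply agree_until (A := {w | ∃ i, i < lenY y₀ h ∧ w = inl (sX x₀ y₀ h i)})
    · intro w hw
      exact fwdA_agree x₀ y₀ w hw
    · intro j hj hmem
      obtain ⟨i, hi, hw⟩ := hmem
      exact nfind_min hexQ hj (Or.inl ⟨i, hi, hw⟩)
  rcases hspec with ⟨i, hi, hw⟩ | hw
  · obtain ⟨k, hk⟩ := chainA x₀ y₀ hb i hi
    refine ⟨k + K, ?_⟩
    rw [iterate_add_apply, hagree, hw, hk]
  · exact ⟨K, by rw [hagree, hw]⟩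

theorem fwdA_Tr (hb : BR y₀ h) : Tr y₀ (fwdA x₀ y₀ h) :=
  ⟨fwdA_BR x₀ y₀ hb, fwdA_conv x₀ y₀ hb⟩

noncomputable def mkA (h : Fin m ⊕ Fin n → Fin m ⊕ Fin n) : Fin n :=
  if 0 < lenY y₀ h then oT y₀ h 0 else y₀

theorem orbit_even (hb : BR y₀ h) : ∀ i, i < lenY y₀ h →
    (fwdA x₀ y₀ h)^[2*i] (inr (oT y₀ h 0)) = inr (oT y₀ h i) ∧
      (fwdA x₀ y₀ h)^[2*i+1] (inr (oT y₀ h 0)) = inl (sX x₀ y₀ h i) := by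
  intro i
  induction i with
  | zero =>
    intro hi
    constructor
    · rfl
    · simp only [Nat.mul_zero, Nat.zero_add, iterate_one]
      rw [fwdA_inr, sX_spec x₀ y₀ hb hi]
  | succ i ih =>
    intro hi
    obtain ⟨he, ho⟩ := ih (by omega)
    have he' : (fwdA x₀ y₀ h)^[2*(i+1)] (inr (oT y₀ h 0)) = inr (oT y₀ h (i+1)) := by
      rw [show 2*(i+1) = 1 + (2*i+1) by ring, iterate_add_apply, ho]
      simp only [iterate_one]
      rw [fwdA_inl_mem x₀ y₀ hb (by omega), if_pos hi]
    refine ⟨he', ?_⟩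
    rw [show 2*(i+1)+1 = 1 + 2*(i+1) by ring, iterate_add_apply, he']
    simp only [iterate_one]
    rw [fwdA_inr, sX_spec x₀ y₀ hb hi]

theorem orbit_end (hb : BR y₀ h) (hpos : 0 < lenY y₀ h) :
    (fwdA x₀ y₀ h)^[2 * lenY y₀ h] (inr (oT y₀ h 0)) = inr y₀ := by
  obtain ⟨-, ho⟩ := orbit_even x₀ y₀ hb (lenY y₀ h - 1) (by omega)
  rw [show 2 * lenY y₀ h = 1 + (2*(lenY y₀ h - 1)+1) by omega, iterate_add_apply, ho]
  simp only [iterate_one]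
  rw [fwdA_inl_mem x₀ y₀ hb (by omega), if_neg (by omega)]

theorem orbit_min (hb : BR y₀ h) : ∀ j < 2 * lenY y₀ h,
    (fwdA x₀ y₀ h)^[j] (inr (oT y₀ h 0)) ≠ inr y₀ := by
  intro j hj
  rcases Nat.even_or_odd j with ⟨i, hi⟩ | ⟨i, hi⟩
  · have : j = 2*i := by omega
    rw [this, (orbit_even x₀ y₀ hb i (by omega)).1]
    intro hc
    have hmem := oT_mem y₀ (i := i) (by omega) hb
    have := ((mem_perY y₀).mp hmem).1
    exact this (by injection hc)
  · have : j = 2*i+1 := by omega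
    rw [this, (orbit_even x₀ y₀ hb i (by omega)).2]
    simp

end EqA2


section EqA3
variable {m n : ℕ} (x₀ : Fin m) (y₀ : Fin n)

theorem inj_on_range_periodic {f : ℕ → ℕ} {N : ℕ} (hstab : ∀ i < N, f i < N)
    (hinj : ∀ i < N, ∀ j < N, f i = f j → i = j) :
    ∀ i < N, ∃ c, 0 < c ∧ f^[c] i = i := by
  have hiter : ∀ a i, i < N → f^[a] i < N := by
    intro a
    induction a with
    | zero => intro i hi; simpa using hi
    | succ a ih => intro i hi; rw [iterate_succ_apply]; exact ih _ (hstab i hi)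
  have peel : ∀ a u v, u < N → v < N → f^[a] u = f^[a] v → u = v := by
    intro a
    induction a with
    | zero => intro u v _ _ he; simpa using he
    | succ a ih =>
      intro u v hu hv he
      rw [iterate_succ_apply', iterate_succ_apply'] at he
      exact ih u v hu hv (hinj _ (hiter a u hu) _ (hiter a v hv) he)
  intro i hi
  obtain ⟨a, b, hne, heq⟩ := Finite.exists_ne_map_eq_of_infinite
    (fun a : ℕ => (⟨f^[a] i, hiter a i hi⟩ : Fin N))
  have heq' : f^[a] i = f^[b] i := by
    have := congrArg (Fin.val) heq
    simpa using this
  rcases Nat.lt_or_ge a b with hab | hab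
  · refine ⟨b - a, by omega, ?_⟩
    apply peel a _ _ (hiter _ _ hi) hi
    rw [← iterate_add_apply, show a + (b - a) = b by omega]
    exact heq'.symm
  · have hba : b < a := by omega
    refine ⟨a - b, by omega, ?_⟩
    apply peel b _ _ (hiter _ _ hi) hi
    rw [← iterate_add_apply, show b + (a - b) = a by omega]
    exact heq'

noncomputable def DA (t : Fin m ⊕ Fin n → Fin m ⊕ Fin n)
    (hc : ∀ w, ∃ k, t^[k] w = inr y₀) (y : Fin n) : ℕ := nfind (hc (inr y))

noncomputable def tfb (t : Fin m ⊕ Fin n → Fin m ⊕ Fin n) (y : Fin n) (i : ℕ) : Fin n :=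
  grD y₀ (t^[2*i] (inr y))

noncomputable def sfb (t : Fin m ⊕ Fin n → Fin m ⊕ Fin n) (y : Fin n) (i : ℕ) : Fin m :=
  glD x₀ (t^[2*i+1] (inr y))

noncomputable def TBf (t : Fin m ⊕ Fin n → Fin m ⊕ Fin n) (y : Fin n) (D : ℕ) :
    Finset (Fin n) := (Finset.range (D/2)).image (tfb y₀ t y)

noncomputable def LB (t : Fin m ⊕ Fin n → Fin m ⊕ Fin n) (y : Fin n) (D : ℕ) :
    List (Fin n) := (TBf y₀ t y D).sort (· ≤ ·)

noncomputable def bwdA (t : Fin m ⊕ Fin n → Fin m ⊕ Fin n) (y : Fin n) (D : ℕ) :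
    Fin m ⊕ Fin n → Fin m ⊕ Fin n := fun v => match v with
  | inl x => if hx : ∃ i, i < D/2 ∧ sfb x₀ t y i = x then
      inr (tfb y₀ t y ((LB y₀ t y D).idxOf (tfb y₀ t y (nfind hx))))
    else t (inl x)
  | inr y' => t (inr y')

variable {t : Fin m ⊕ Fin n → Fin m ⊕ Fin n} {y : Fin n} {D : ℕ}

-- hypotheses bundle for a marked tree
structure PathFacts (t : Fin m ⊕ Fin n → Fin m ⊕ Fin n) (y₀ y : Fin n) (D : ℕ) : Prop where
  tr : Tr y₀ t
  spec : t^[D] (inr y) = inr y₀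
  min : ∀ j < D, t^[j] (inr y) ≠ inr y₀

theorem DA_pf (htr : Tr y₀ t) (y : Fin n) : PathFacts t y₀ y (DA y₀ t htr.2 y) :=
  ⟨htr, nfind_spec (htr.2 (inr y)), fun _ hj => nfind_min (htr.2 (inr y)) hj⟩

theorem pf_even (pf : PathFacts t y₀ y D) : 2 * (D / 2) = D := by
  have hside := side_iter (h := t) (v := (inr y : Fin m ⊕ Fin n)) (k := D)
    (fun j hj => pf.tr.1.1 _ (pf.min j hj))
  rw [pf.spec] at hside
  simp only [isLeft_inr] at hside
  by_cases hev : Even D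
  · obtain ⟨k, hk⟩ := hev; omega
  · rw [if_neg hev] at hside
    simp at hside

theorem tfb_spec (pf : PathFacts t y₀ y D) {i : ℕ} (hi : 2*i ≤ D) :
    t^[2*i] (inr y) = inr (tfb y₀ t y i) := by
  have hside := side_iter (h := t) (v := (inr y : Fin m ⊕ Fin n)) (k := 2*i)
    (fun j hj => pf.tr.1.1 _ (pf.min j (by omega)))
  rw [if_pos (by exact ⟨i, by omega⟩)] at hside
  simp only [isLeft_inr] at hside
  exact eq_inr_grD y₀ hside

theorem sfb_spec (pf : PathFacts t y₀ y D) {i : ℕ} (hi : 2*i+1 ≤ D) :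
    t^[2*i+1] (inr y) = inl (sfb x₀ t y i) := by
  have hside := side_iter (h := t) (v := (inr y : Fin m ⊕ Fin n)) (k := 2*i+1)
    (fun j hj => pf.tr.1.1 _ (pf.min j (by omega)))
  rw [if_neg (by simp [Nat.even_add_one, Nat.even_mul])] at hside
  simp only [isLeft_inr, Bool.not_false] at hside
  exact eq_inl_glD x₀ hside

theorem tfb_ne (pf : PathFacts t y₀ y D) {i : ℕ} (hi : 2*i < D) : tfb y₀ t y i ≠ y₀ := by
  intro hc
  apply pf.min (2*i) hi
  rw [tfb_spec y₀ pf (by omega), hc]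

theorem tfb_inj (pf : PathFacts t y₀ y D) {i j : ℕ} (hi : 2*i ≤ D) (hj : 2*j ≤ D)
    (heq : tfb y₀ t y i = tfb y₀ t y j) : i = j := by
  have := path_inj pf.spec pf.min (i := 2*i) (j := 2*j) hi hj
    (by rw [tfb_spec y₀ pf hi, tfb_spec y₀ pf hj, heq])
  omega

theorem sfb_inj (pf : PathFacts t y₀ y D) {i j : ℕ} (hi : 2*i+1 ≤ D) (hj : 2*j+1 ≤ D)
    (heq : sfb x₀ t y i = sfb x₀ t y j) : i = j := by
  have := path_inj pf.spec pf.min (i := 2*i+1) (j := 2*j+1) hi hj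
    (by rw [sfb_spec x₀ y₀ pf hi, sfb_spec x₀ y₀ pf hj, heq])
  omega

theorem mem_TBf {y' : Fin n} : y' ∈ TBf y₀ t y D ↔ ∃ i, i < D/2 ∧ tfb y₀ t y i = y' := by
  simp [TBf, Finset.mem_image]

theorem LB_length (pf : PathFacts t y₀ y D) : (LB y₀ t y D).length = D/2 := by
  have hcard : (TBf y₀ t y D).card = D/2 := by
    rw [TBf, Finset.card_image_of_injOn, Finset.card_range]
    intro a ha b hb hab
    simp only [Finset.mem_coe, Finset.mem_range] at ha hb
    have he := pf_even y₀ pf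
    exact tfb_inj y₀ pf (by omega) (by omega) hab
  rw [LB, Finset.length_sort, hcard]

theorem LB_getD_indexOf (pf : PathFacts t y₀ y D) {y' : Fin n} (hy' : y' ∈ TBf y₀ t y D) :
    (LB y₀ t y D).idxOf y' < D/2 ∧
      (LB y₀ t y D).getD ((LB y₀ t y D).idxOf y') y₀ = y' := by
  have hmem : y' ∈ LB y₀ t y D := (Finset.mem_sort (α := Fin n) (· ≤ ·)).mpr hy'
  have hlt : (LB y₀ t y D).idxOf y' < (LB y₀ t y D).length :=
    List.idxOf_lt_length_iff.mpr hmem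
  refine ⟨by rwa [LB_length y₀ pf] at hlt, ?_⟩
  rw [List.getD_eq_getElem _ _ hlt]
  exact List.getElem_idxOf hlt

noncomputable def ρf (t : Fin m ⊕ Fin n → Fin m ⊕ Fin n) (y : Fin n) (D : ℕ) (i : ℕ) : ℕ :=
  (LB y₀ t y D).idxOf (tfb y₀ t y i)

theorem ρf_lt (pf : PathFacts t y₀ y D) {i : ℕ} (hi : i < D/2) : ρf y₀ t y D i < D/2 :=
  (LB_getD_indexOf y₀ pf (mem_TBf y₀ |>.mpr ⟨i, hi, rfl⟩)).1

theorem ρf_inj (pf : PathFacts t y₀ y D) {i j : ℕ} (hi : i < D/2) (hj : j < D/2)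
    (heq : ρf y₀ t y D i = ρf y₀ t y D j) : i = j := by
  have he := pf_even y₀ pf
  apply tfb_inj y₀ pf (by omega) (by omega)
  have h1 := (LB_getD_indexOf y₀ pf (mem_TBf y₀ |>.mpr ⟨i, hi, rfl⟩)).2
  have h2 := (LB_getD_indexOf y₀ pf (mem_TBf y₀ |>.mpr ⟨j, hj, rfl⟩)).2
  rw [← h1, ← h2, ρf, ρf] at *
  rw [heq]

theorem bw_inr (y' : Fin n) : bwdA x₀ y₀ t y D (inr y') = t (inr y') := rfl

theorem bw_off {x : Fin m} (hx : ¬ ∃ i, i < D/2 ∧ sfb x₀ t y i = x) :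
    bwdA x₀ y₀ t y D (inl x) = t (inl x) := by
  simp only [bwdA]
  rw [dif_neg hx]

theorem bw_mem (pf : PathFacts t y₀ y D) {i : ℕ} (hi : i < D/2) :
    bwdA x₀ y₀ t y D (inl (sfb x₀ t y i)) = inr (tfb y₀ t y (ρf y₀ t y D i)) := by
  have he := pf_even y₀ pf
  have hx : ∃ j, j < D/2 ∧ sfb x₀ t y j = sfb x₀ t y i := ⟨i, hi, rfl⟩
  have hfind : nfind hx = i := by
    apply nfind_eq hx ⟨hi, rfl⟩
    intro j hj ⟨hj1, hj2⟩
    exact absurd (sfb_inj x₀ y₀ pf (by omega) (by omega) hj2) (by omega)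
  simp only [bwdA]
  rw [dif_pos hx, hfind]
  rfl

theorem bw_step (pf : PathFacts t y₀ y D) {i : ℕ} (hi : i < D/2) :
    bwdA x₀ y₀ t y D (inr (tfb y₀ t y i)) = inl (sfb x₀ t y i) := by
  have he := pf_even y₀ pf
  rw [bw_inr, ← tfb_spec y₀ pf (by omega : 2*i ≤ D),
    show t (t^[2*i] (inr y)) = t^[2*i+1] (inr y) from (iterate_succ_apply' t (2*i) (inr y)).symm,
    sfb_spec x₀ y₀ pf (by omega)]

theorem bw_two (pf : PathFacts t y₀ y D) {i : ℕ} (hi : i < D/2) :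
    (bwdA x₀ y₀ t y D)^[2] (inr (tfb y₀ t y i)) = inr (tfb y₀ t y (ρf y₀ t y D i)) := by
  rw [iter_two, bw_step x₀ y₀ pf hi, bw_mem x₀ y₀ pf hi]

theorem bw_iter_two (pf : PathFacts t y₀ y D) :
    ∀ c, ∀ i, i < D/2 → (bwdA x₀ y₀ t y D)^[2*c] (inr (tfb y₀ t y i)) =
      inr (tfb y₀ t y ((ρf y₀ t y D)^[c] i)) := by
  intro c
  induction c with
  | zero => intro i _; rfl
  | succ c ih =>
    intro i hi
    rw [show 2*(c+1) = 2*c + 2 by ring, iterate_add_apply, bw_two x₀ y₀ pf hi,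
      ih _ (ρf_lt y₀ pf hi), iterate_succ_apply]

theorem bw_per (pf : PathFacts t y₀ y D) {i : ℕ} (hi : i < D/2) :
    Per (bwdA x₀ y₀ t y D) (inr (tfb y₀ t y i)) := by
  obtain ⟨c, hc, hcyc⟩ := inj_on_range_periodic (f := ρf y₀ t y D) (N := D/2)
    (fun j hj => ρf_lt y₀ pf hj) (fun a ha b hb => ρf_inj y₀ pf ha hb) i hi
  refine ⟨2*c, by omega, ?_⟩
  rw [bw_iter_two x₀ y₀ pf c i hi, hcyc]

theorem bwdA_BR (pf : PathFacts t y₀ y D) : BR y₀ (bwdA x₀ y₀ t y D) := by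
  constructor
  · rintro (x | y') hv
    · rw [flips]
      simp only [bwdA]
      split
      · simp
      · have := pf.tr.1.1 (inl x) (by simp)
        rw [flips] at this
        exact this
    · rw [flips, bw_inr]
      exact pf.tr.1.1 (inr y') hv
  · rw [bw_inr, pf.tr.1.2]

end EqA3


section EqA4
variable {m n : ℕ} (x₀ : Fin m) (y₀ : Fin n)
variable {t h : Fin m ⊕ Fin n → Fin m ⊕ Fin n} {y : Fin n} {D : ℕ}

theorem bw_agree : ∀ w, ¬ (∃ i, i < D/2 ∧ w = inl (sfb x₀ t y i)) →
    bwdA x₀ y₀ t y D w = t w := by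
  rintro (x | y') hw
  · apply bw_off
    rintro ⟨i, hi, rfl⟩
    exact hw ⟨i, hi, rfl⟩
  · rfl

theorem perY_bwdA (pf : PathFacts t y₀ y D) :
    perY y₀ (bwdA x₀ y₀ t y D) = TBf y₀ t y D := by
  have he := pf_even y₀ pf
  ext y'
  rw [mem_perY, mem_TBf]
  constructor
  · rintro ⟨hy0, hPer⟩
    by_contra hno
    push_neg at hno
    set B := bwdA x₀ y₀ t y D with hB
    set C : Set (Fin m ⊕ Fin n) := {w | w = inr y₀ ∨ (∃ i, i < D/2 ∧ w = inl (sfb x₀ t y i))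
      ∨ (∃ i, i < D/2 ∧ w = inr (tfb y₀ t y i))} with hC
    have hCc : ∀ w ∈ C, B w ∈ C := by
      rintro w (rfl | ⟨i, hi, rfl⟩ | ⟨i, hi, rfl⟩)
      · have : B (inr y₀) = inr y₀ := by rw [hB, bw_inr, pf.tr.1.2]
        rw [this]; left; rfl
      · rw [hB, bw_mem x₀ y₀ pf hi]
        right; right
        exact ⟨_, ρf_lt y₀ pf hi, rfl⟩
      · rw [hB, bw_step x₀ y₀ pf hi]
        right; left
        exact ⟨_, hi, rfl⟩
    have hwC : (inr y' : Fin m ⊕ Fin n) ∉ C := by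
      rintro (hc | ⟨i, hi, hc⟩ | ⟨i, hi, hc⟩)
      · exact hy0 (by injection hc)
      · exact absurd hc (by simp)
      · refine hno i hi ?_
        injection hc with h2
        exact h2.symm
    -- first entry of the t-orbit into the changed set / root
    have hexQ : ∃ k, (∃ i, i < D/2 ∧ t^[k] (inr y') = inl (sfb x₀ t y i)) ∨
        t^[k] (inr y') = inr y₀ := by
      obtain ⟨k, hk⟩ := pf.tr.2 (inr y')
      exact ⟨k, Or.inr hk⟩
    set K := nfind hexQ with hK
    have hagree : B^[K] (inr y') = t^[K] (inr y') := by
      apply agree_until (A := {w | ∃ i, i < D/2 ∧ w = inl (sfb x₀ t y i)})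
      · intro w hw
        exact bw_agree x₀ y₀ w hw
      · intro j hj ⟨i, hi, hw⟩
        exact nfind_min hexQ hj (Or.inl ⟨i, hi, hw⟩)
    have hKC : B^[K] (inr y') ∈ C := by
      rw [hagree]
      rcases nfind_spec hexQ with ⟨i, hi, hw⟩ | hw
      · rw [hw]; right; left; exact ⟨i, hi, rfl⟩
      · rw [hw]; left; rfl
    have hstay : ∀ d, B^[K + d] (inr y') ∈ C := by
      intro d
      induction d with
      | zero => simpa using hKC
      | succ d ih =>
        rw [show K + (d+1) = (K + d) + 1 by ring, iterate_succ_apply']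
        exact hCc _ ih
    obtain ⟨p, hp, hpw⟩ := hPer
    have hmult : B^[(K+1) * p] (inr y') = inr y' := Per.mult hpw (K+1)
    have : inr y' ∈ C := by
      have hKp : K ≤ (K+1) * p := by nlinarith
      have h1 : (K+1) * p = K + ((K+1)*p - K) := by omega
      rw [← hmult, h1]
      exact hstay _
    exact hwC this
  · rintro ⟨i, hi, rfl⟩
    exact ⟨tfb_ne y₀ pf (by omega), bw_per x₀ y₀ pf hi⟩

theorem psi_bwdA (pf : PathFacts t y₀ y D) {i : ℕ} (hi : i < D/2) :
    ψf y₀ (bwdA x₀ y₀ t y D) (tfb y₀ t y i) = tfb y₀ t y (ρf y₀ t y D i) := by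
  rw [ψf, bw_step x₀ y₀ pf hi, bw_mem x₀ y₀ pf hi]
  simp

theorem LY_bwdA (pf : PathFacts t y₀ y D) :
    LY y₀ (bwdA x₀ y₀ t y D) = LB y₀ t y D := by
  rw [LY, LB, perY_bwdA x₀ y₀ pf]

theorem lenY_bwdA (pf : PathFacts t y₀ y D) : lenY y₀ (bwdA x₀ y₀ t y D) = D/2 := by
  rw [lenY, LY_bwdA x₀ y₀ pf, LB_length y₀ pf]

theorem indexOf_getD_LB (pf : PathFacts t y₀ y D) {i : ℕ} (hi : i < D/2) :
    (LB y₀ t y D).idxOf ((LB y₀ t y D).getD i y₀) = i := by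
  have hlen : i < (LB y₀ t y D).length := by rwa [LB_length y₀ pf]
  rw [List.getD_eq_getElem _ _ hlen]
  have hmem : (LB y₀ t y D)[i] ∈ LB y₀ t y D := List.getElem_mem hlen
  have hlt : (LB y₀ t y D).idxOf ((LB y₀ t y D)[i]) < (LB y₀ t y D).length :=
    List.idxOf_lt_length_iff.mpr hmem
  have hnd : (LB y₀ t y D).Nodup := (TBf y₀ t y D).sort_nodup (· ≤ ·)
  have hget : (LB y₀ t y D)[(LB y₀ t y D).idxOf ((LB y₀ t y D)[i])] =
      (LB y₀ t y D)[i] := List.getElem_idxOf hlt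
  exact (List.Nodup.getElem_inj_iff hnd).mp hget

theorem oT_bwdA (pf : PathFacts t y₀ y D) {i : ℕ} (hi : i < D/2) :
    oT y₀ (bwdA x₀ y₀ t y D) i = tfb y₀ t y i := by
  rw [oT, LY_bwdA x₀ y₀ pf]
  have hlen : i < (LB y₀ t y D).length := by rwa [LB_length y₀ pf]
  have hmem : (LB y₀ t y D).getD i y₀ ∈ TBf y₀ t y D := by
    rw [List.getD_eq_getElem _ _ hlen]
    have : (LB y₀ t y D)[i] ∈ LB y₀ t y D := List.getElem_mem hlen
    rwa [← Finset.mem_sort (α := Fin n) (· ≤ ·)]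
  obtain ⟨j, hj, hjt⟩ := (mem_TBf y₀).mp hmem
  have hrho : ρf y₀ t y D j = i := by
    rw [ρf, hjt]
    exact indexOf_getD_LB y₀ pf hi
  rw [← hjt, psi_bwdA x₀ y₀ pf hj, hrho]

theorem sX_bwdA (pf : PathFacts t y₀ y D) {i : ℕ} (hi : i < D/2) :
    sX x₀ y₀ (bwdA x₀ y₀ t y D) i = sfb x₀ t y i := by
  rw [sX, oT_bwdA x₀ y₀ pf hi, bw_step x₀ y₀ pf hi]
  simp

theorem rt2A (pf : PathFacts t y₀ y D) :
    fwdA x₀ y₀ (bwdA x₀ y₀ t y D) = t ∧ mkA y₀ (bwdA x₀ y₀ t y D) = y := by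
  have he := pf_even y₀ pf
  have hBR := bwdA_BR x₀ y₀ pf
  constructor
  · funext v
    cases v with
    | inr y' => rfl
    | inl x =>
      by_cases hx : ∃ i, i < D/2 ∧ sfb x₀ t y i = x
      · obtain ⟨i, hi, rfl⟩ := hx
        have h1 : (inl (sfb x₀ t y i) : Fin m ⊕ Fin n) =
            inl (sX x₀ y₀ (bwdA x₀ y₀ t y D) i) := by
          rw [sX_bwdA x₀ y₀ pf hi]
        rw [h1, fwdA_inl_mem x₀ y₀ hBR (by rw [lenY_bwdA x₀ y₀ pf]; exact hi)]
        rw [lenY_bwdA x₀ y₀ pf]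
        by_cases hnext : i + 1 < D/2
        · rw [if_pos hnext, oT_bwdA x₀ y₀ pf hnext, ← h1]
          have hstep : t^[2*(i+1)] (inr y) = t (t^[2*i+1] (inr y)) := by
            rw [show 2*(i+1) = (2*i+1)+1 by ring]
            exact iterate_succ_apply' t (2*i+1) (inr y)
          have hval : t (inl (sfb x₀ t y i)) = t^[2*(i+1)] (inr y) := by
            rw [← sfb_spec x₀ y₀ pf (by omega), hstep]
          rw [hval, tfb_spec y₀ pf (by omega)]
        · rw [if_neg hnext, ← h1]
          have h2D : 2*(i+1) = D := by omega
          have hstep : t^[2*(i+1)] (inr y) = t (t^[2*i+1] (inr y)) := by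
            rw [show 2*(i+1) = (2*i+1)+1 by ring]
            exact iterate_succ_apply' t (2*i+1) (inr y)
          have hval : t (inl (sfb x₀ t y i)) = t^[2*(i+1)] (inr y) := by
            rw [← sfb_spec x₀ y₀ pf (by omega), hstep]
          rw [hval, h2D, pf.spec]
      · have hx' : ¬ ∃ i, i < lenY y₀ (bwdA x₀ y₀ t y D) ∧
            sX x₀ y₀ (bwdA x₀ y₀ t y D) i = x := by
          rintro ⟨i, hi, hix⟩
          rw [lenY_bwdA x₀ y₀ pf] at hi
          rw [sX_bwdA x₀ y₀ pf hi] at hix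
          exact hx ⟨i, hi, hix⟩
        rw [fwdA_inl_off x₀ y₀ hx', bw_off x₀ y₀ hx]
  · rw [mkA, lenY_bwdA x₀ y₀ pf]
    by_cases hpos : 0 < D/2
    · rw [if_pos hpos, oT_bwdA x₀ y₀ pf hpos, tfb]
      simp
    · rw [if_neg hpos]
      have hD0 : D = 0 := by omega
      have := pf.spec
      rw [hD0] at this
      simp only [iterate_zero, id] at this
      injection this.symm

theorem rt1A (hb : BR y₀ h) :
    bwdA x₀ y₀ (fwdA x₀ y₀ h) (mkA y₀ h)
      (DA y₀ (fwdA x₀ y₀ h) (fwdA_Tr x₀ y₀ hb).2 (mkA y₀ h)) = h := by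
  by_cases hlen : 0 < lenY y₀ h
  · -- the mark is oT 0 and the hitting time is 2 * lenY
    have hmk : mkA y₀ h = oT y₀ h 0 := by rw [mkA, if_pos hlen]
    have hDval : DA y₀ (fwdA x₀ y₀ h) (fwdA_Tr x₀ y₀ hb).2 (mkA y₀ h) = 2 * lenY y₀ h := by
      rw [DA]
      apply nfind_eq
      · rw [hmk]; exact orbit_end x₀ y₀ hb hlen
      · intro j hj
        rw [hmk]; exact orbit_min x₀ y₀ hb j hj
    rw [hDval, hmk]
    have hhalf : (2 * lenY y₀ h) / 2 = lenY y₀ h := by omega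
    have htfb : ∀ i, i < lenY y₀ h → tfb y₀ (fwdA x₀ y₀ h) (oT y₀ h 0) i = oT y₀ h i := by
      intro i hi
      rw [tfb, (orbit_even x₀ y₀ hb i hi).1]
      simp
    have hsfb : ∀ i, i < lenY y₀ h →
        sfb x₀ (fwdA x₀ y₀ h) (oT y₀ h 0) i = sX x₀ y₀ h i := by
      intro i hi
      rw [sfb, (orbit_even x₀ y₀ hb i hi).2]
      simp
    have hTB : TBf y₀ (fwdA x₀ y₀ h) (oT y₀ h 0) (2 * lenY y₀ h) = perY y₀ h := by
      ext y'
      rw [mem_TBf, hhalf]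
      constructor
      · rintro ⟨i, hi, rfl⟩
        rw [htfb i hi]
        exact oT_mem y₀ hi hb
      · intro hy'
        obtain ⟨i, hi, hoT⟩ := oT_surj y₀ hb hy'
        exact ⟨i, hi, by rw [htfb i hi, hoT]⟩
    have hLB : LB y₀ (fwdA x₀ y₀ h) (oT y₀ h 0) (2 * lenY y₀ h) = LY y₀ h := by
      rw [LB, LY, hTB]
    funext v
    cases v with
    | inr y' => rfl
    | inl x =>
      by_cases hx : ∃ i, i < lenY y₀ h ∧ sX x₀ y₀ h i = x
      · obtain ⟨i, hi, rfl⟩ := hx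
        have h1 : (inl (sX x₀ y₀ h i) : Fin m ⊕ Fin n) =
            inl (sfb x₀ (fwdA x₀ y₀ h) (oT y₀ h 0) i) := by rw [hsfb i hi]
        have pf' : PathFacts (fwdA x₀ y₀ h) y₀ (oT y₀ h 0) (2 * lenY y₀ h) :=
          ⟨fwdA_Tr x₀ y₀ hb, orbit_end x₀ y₀ hb hlen, orbit_min x₀ y₀ hb⟩
        have hL : bwdA x₀ y₀ (fwdA x₀ y₀ h) (oT y₀ h 0) (2 * lenY y₀ h)
            (inl (sX x₀ y₀ h i)) = inr (tfb y₀ (fwdA x₀ y₀ h) (oT y₀ h 0)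
              (ρf y₀ (fwdA x₀ y₀ h) (oT y₀ h 0) (2 * lenY y₀ h) i)) := by
          rw [h1]
          exact bw_mem x₀ y₀ pf' (by omega)
        have hR : h (inl (sX x₀ y₀ h i)) =
            inr (oT y₀ h ((LY y₀ h).idxOf (oT y₀ h i))) := by
          rw [fS_spec x₀ y₀ hb hi, psi_oT y₀ hb hi]
        have hρ : ρf y₀ (fwdA x₀ y₀ h) (oT y₀ h 0) (2 * lenY y₀ h) i =
            (LY y₀ h).idxOf (oT y₀ h i) := by
          rw [ρf, hLB, htfb i hi]
        rw [hL, hR, hρ, htfb _ (rank_lt y₀ hb hi)]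
      · have hx' : ¬ ∃ i, i < (2 * lenY y₀ h)/2 ∧
            sfb x₀ (fwdA x₀ y₀ h) (oT y₀ h 0) i = x := by
          rintro ⟨i, hi, hix⟩
          rw [hhalf] at hi
          rw [hsfb i hi] at hix
          exact hx ⟨i, hi, hix⟩
        rw [bw_off x₀ y₀ hx', fwdA_inl_off x₀ y₀ hx]
  · -- no periodic points : fwdA is the identity transformation
    have hfwd : fwdA x₀ y₀ h = h := by
      funext v
      cases v with
      | inr y' => rfl
      | inl x =>
        apply fwdA_inl_off
        rintro ⟨i, hi, -⟩
        omega
    have hmk : mkA y₀ h = y₀ := by rw [mkA, if_neg hlen]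
    have hDval : DA y₀ (fwdA x₀ y₀ h) (fwdA_Tr x₀ y₀ hb).2 (mkA y₀ h) = 0 := by
      rw [DA]
      apply nfind_eq
      · simp only [iterate_zero, id]
        rw [hmk]
      · intro j hj
        omega
    rw [hDval, hmk, hfwd]
    funext v
    cases v with
    | inr y' => rfl
    | inl x =>
      apply bw_off
      rintro ⟨i, hi, -⟩
      omega

end EqA4

section Final
variable {m n : ℕ}

noncomputable def eqA (x₀ : Fin m) (y₀ : Fin n) :
    {h : Fin m ⊕ Fin n → Fin m ⊕ Fin n // BR y₀ h} ≃
      {h : Fin m ⊕ Fin n → Fin m ⊕ Fin n // Tr y₀ h} × Fin n where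
  toFun hh := (⟨fwdA x₀ y₀ hh.1, fwdA_Tr x₀ y₀ hh.2⟩, mkA y₀ hh.1)
  invFun tv := ⟨bwdA x₀ y₀ tv.1.1 tv.2 (DA y₀ tv.1.1 tv.1.2.2 tv.2),
    bwdA_BR x₀ y₀ (DA_pf y₀ tv.1.2 tv.2)⟩
  left_inv hh := Subtype.ext (rt1A x₀ y₀ hh.2)
  right_inv tv := by
    obtain ⟨⟨t, htr⟩, y⟩ := tv
    obtain ⟨h1, h2⟩ := rt2A x₀ y₀ (DA_pf y₀ htr y)
    simp only [Prod.mk.injEq]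
    exact ⟨Subtype.ext h1, h2⟩

end Final

theorem main_count (m n : ℕ) (hm : 1 ≤ m) (hn : 1 ≤ n) :
    Nat.card {fg : (Fin m → Fin n) × (Fin n → Fin m) //
        ∃ k > 0, ∃ c : Fin m, ∀ x : Fin m, (fg.2 ∘ fg.1)^[k] x = c} =
      m ^ (n - 1) * n ^ (m - 1) * (m + n - 1) := by
  let x₀ : Fin m := ⟨0, hm⟩
  let y₀ : Fin n := ⟨0, hn⟩
  set Q := Nat.card {h : Fin m ⊕ Fin n → Fin m ⊕ Fin n // Tr y₀ h} with hQ
  -- counting the bipartite rooted structures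
  have hsub : Nat.card {y : Fin n // y ≠ y₀} = n - 1 := by
    rw [Nat.card_eq_fintype_card]
    rw [Fintype.card_subtype_compl]
    simp
  have hBR : Nat.card {h : Fin m ⊕ Fin n → Fin m ⊕ Fin n // BR y₀ h} =
      n ^ m * m ^ (n - 1) := by
    rw [Nat.card_congr (eq4 x₀ y₀), Nat.card_prod, Nat.card_eq_fintype_card,
      Nat.card_eq_fintype_card, Fintype.card_fun, Fintype.card_fun]
    congr 2
    · simp
    · simp
    · simp
    · rw [Fintype.card_subtype_compl]
      simp
  have hA : Nat.card {h : Fin m ⊕ Fin n → Fin m ⊕ Fin n // BR y₀ h} = Q * n := by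
    rw [Nat.card_congr (eqA x₀ y₀), Nat.card_prod, Nat.card_eq_fintype_card (α := Fin n)]
    simp [hQ]
  have hQval : Q = n ^ (m - 1) * m ^ (n - 1) := by
    have h1 : Q * n = (n ^ (m - 1) * m ^ (n - 1)) * n := by
      rw [← hA, hBR]
      have : n ^ m = n ^ (m - 1) * n := by
        rw [← pow_succ]
        congr 1
        omega
      rw [this]
      ring
    exact Nat.eq_of_mul_eq_mul_right (by omega) h1
  have hVsub : Nat.card {v : Fin m ⊕ Fin n // v ≠ inr y₀} = m + n - 1 := by
    rw [Nat.card_eq_fintype_card, Fintype.card_subtype_compl]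
    simp
  rw [Nat.card_congr (eqE x₀ y₀), Nat.card_congr (eqB x₀ y₀), Nat.card_prod, ← hQ, hVsub,
    hQval]
  ring

end ECP

theorem card_eventually_constant_pairs
    (m n : ℕ) (hm : 1 ≤ m) (hn : 1 ≤ n) :
    Nat.card {fg : (Fin m → Fin n) × (Fin n → Fin m) //
        ∃ k > 0, ∃ c : Fin m, ∀ x : Fin m, (fg.2 ∘ fg.1)^[k] x = c} =
      m ^ (n - 1) * n ^ (m - 1) * (m + n - 1) := by
  exact ECP.main_count m n hm hn
end

section
/- Let k be a field, V and W finite-dimensional k-vector spaces, and f : V →ₗ[k] W, g : W →ₗ[k] V linear maps. Then there exist submodules V_I, V_N of V and W_I, W_N of W such that: IsCompl V_I V_N and IsCompl W_I W_N; f maps V_I into W_I and V_N into W_N; g maps W_I into V_I and W_N into V_N; the restriction of g ∘ f to V_I is a bijection of V_I and the restriction of f ∘ g to W_I is a bijection of W_I; and the restrictions of g ∘ f to V_N and of f ∘ g to W_N are nilpotent endomorphisms. -/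
/-!
Take `V_I, V_N` to be the Fitting components `⨅ n, range ((g ∘ f) ^ n)` and `⨆ n, ker ((g ∘ f) ^ n)`
of `g ∘ f`, and `W_I, W_N` those of `f ∘ g`. Since `f ∘ (g ∘ f) = (f ∘ g) ∘ f`, the map `f` carries
the Fitting components of `g ∘ f` into those of `f ∘ g`, and symmetrically for `g`. On the stable
range an endomorphism is surjective, hence bijective by finite-dimensionality; on the stable
kernel a single power of it vanishes.
-/

open Function LinearMap

namespace Module.End

section Semiring

variable {R M N : Type*} [Semiring R] [AddCommMonoid M] [Module R M] [AddCommMonoid N] [Module R N]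

theorem map_mem_iInf_range_pow {f : M →ₗ[R] N} {e : End R M} {e' : End R N}
    (h : e'.comp f = f.comp e) : ∀ x ∈ ⨅ n, range (e ^ n), f x ∈ ⨅ n, range (e' ^ n) := by
  intro x hx
  simp only [Submodule.mem_iInf, mem_range] at hx ⊢
  intro n
  obtain ⟨y, rfl⟩ := hx n
  exact ⟨f y, LinearMap.congr_fun (commute_pow_left_of_commute h n) y⟩

theorem map_mem_iSup_ker_pow {f : M →ₗ[R] N} {e : End R M} {e' : End R N}
    (h : e'.comp f = f.comp e) : ∀ x ∈ ⨆ n, ker (e ^ n), f x ∈ ⨆ n, ker (e' ^ n) := by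
  suffices ⨆ n, ker (e ^ n) ≤ (⨆ n, ker (e' ^ n)).comap f from fun x hx ↦ this hx
  refine iSup_le fun n x hx ↦ Submodule.mem_iSup_of_mem n ?_
  rw [mem_ker] at hx ⊢
  rw [← LinearMap.comp_apply, commute_pow_left_of_commute h n, LinearMap.comp_apply, hx, map_zero]

theorem isNilpotent_restrict_iSup_ker_pow [IsNoetherian R M] (f : End R M)
    (h : ∀ x ∈ ⨆ n, ker (f ^ n), f x ∈ ⨆ n, ker (f ^ n)) : IsNilpotent (f.restrict h) := by
  obtain ⟨n, hn⟩ := f.eventually_iSup_ker_pow_eq.exists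
  refine ⟨n, ext fun x ↦ Subtype.ext ?_⟩
  have hx : x.1 ∈ ker (f ^ n) := hn ▸ x.2
  rw [pow_restrict, restrict_apply]
  simpa using hx

end Semiring

section Ring

variable {R M : Type*} [Ring R] [AddCommGroup M] [Module R M]

theorem bijective_restrict_iInf_range_pow [IsArtinian R M] [IsNoetherian R M] (f : End R M)
    (h : ∀ x ∈ ⨅ n, range (f ^ n), f x ∈ ⨅ n, range (f ^ n)) : Bijective (f.restrict h) := by
  obtain ⟨n, hn⟩ := Filter.eventually_atTop.mp f.eventually_iInf_range_pow_eq
  refine IsNoetherian.bijective_of_surjective_endomorphism (f.restrict h) fun ⟨y, hy⟩ ↦ ?_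
  obtain ⟨x, rfl⟩ : y ∈ range (f ^ (n + 1)) := hn (n + 1) n.le_succ ▸ hy
  refine ⟨⟨(f ^ n) x, hn n le_rfl ▸ mem_range_self _ x⟩, Subtype.ext ?_⟩
  simp [pow_succ']

end Ring

end Module.End

open Module.End

theorem fitting_decomposition_pair
    (k V W : Type*) [Field k] [AddCommGroup V] [Module k V] [FiniteDimensional k V]
    [AddCommGroup W] [Module k W] [FiniteDimensional k W]
    (f : V →ₗ[k] W) (g : W →ₗ[k] V) :
    ∃ (VI VN : Submodule k V) (WI WN : Submodule k W),
      IsCompl VI VN ∧ IsCompl WI WN ∧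
      (∀ v ∈ VI, f v ∈ WI) ∧ (∀ v ∈ VN, f v ∈ WN) ∧
      (∀ w ∈ WI, g w ∈ VI) ∧ (∀ w ∈ WN, g w ∈ VN) ∧
      ∃ (h1 : ∀ v ∈ VI, (g ∘ₗ f) v ∈ VI) (h2 : ∀ w ∈ WI, (f ∘ₗ g) w ∈ WI)
        (h3 : ∀ v ∈ VN, (g ∘ₗ f) v ∈ VN) (h4 : ∀ w ∈ WN, (f ∘ₗ g) w ∈ WN),
        Function.Bijective ((g ∘ₗ f).restrict h1) ∧
        Function.Bijective ((f ∘ₗ g).restrict h2) ∧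
        IsNilpotent ((g ∘ₗ f).restrict h3) ∧
        IsNilpotent ((f ∘ₗ g).restrict h4) := by
  refine ⟨_, _, _, _, (g ∘ₗ f).isCompl_iSup_ker_pow_iInf_range_pow.symm,
    (f ∘ₗ g).isCompl_iSup_ker_pow_iInf_range_pow.symm,
    map_mem_iInf_range_pow rfl, map_mem_iSup_ker_pow rfl,
    map_mem_iInf_range_pow rfl, map_mem_iSup_ker_pow rfl,
    map_mem_iInf_range_pow rfl, map_mem_iInf_range_pow rfl,
    map_mem_iSup_ker_pow rfl, map_mem_iSup_ker_pow rfl,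
    bijective_restrict_iInf_range_pow _ _, bijective_restrict_iInf_range_pow _ _,
    isNilpotent_restrict_iSup_ker_pow _ _, isNilpotent_restrict_iSup_ker_pow _ _⟩
end

section
/- Let F be a finite field with exactly q elements, let m, n, r be natural numbers with r ≤ min(m, n), and let V = Fin m → F, W = Fin n → F. Then the number of F-linear maps f : V →ₗ[F] W whose rank equals r (i.e. the dimension of the range of f is r) satisfies: (Nat.card {f : V →ₗ[F] W // finrank F (range f) = r}) · ∏_{i=0}^{r−1} (q^r − q^i) = (∏_{i=0}^{r−1} (q^m − q^i)) · (∏_{i=0}^{r−1} (q^n − q^i)). In particular this count equals the product of the two Gaussian binomial coefficients [m choose r]_q and [n choose r]_q with ∏_{i=0}^{r−1}(q^r − q^i). -/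
/-!
Every linear map `f` of rank `r` factors as `i ∘ p` with `p : V ↠ F^r` surjective and
`i : F^r ↪ W` injective, and the factorizations of `f` correspond to the isomorphisms
`F^r ≃ range f`, so each such `f` has exactly `|GL_r(F)|` of them. Counting all pairs `(p, i)`
therefore gives `#{rank r maps} · |GL_r(F)| = #{surjections V ↠ F^r} · #{injections F^r ↪ W}`.
Injections `F^r ↪ W` are linearly independent `r`-tuples in `W`, and transposition turns
surjections `V ↠ F^r` into injections `(F^r)* ↪ V*`.
-/

open Module LinearMap Function

section Ring

variable {R U V W : Type*} [Ring R] [AddCommGroup U] [Module R U] [AddCommGroup V] [Module R V]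
  [AddCommGroup W] [Module R W]

theorem injective_iff_linearIndependent_comp_basis {ι : Type*} (b : Basis ι R U)
    (f : U →ₗ[R] W) : Injective f ↔ LinearIndependent R (f ∘ b) :=
  ⟨fun h => b.linearIndependent.map' f (ker_eq_bot.2 h),
    LinearMap.injective_of_linearIndependent b.span_eq⟩

theorem finrank_range_comp_of_surjective_of_injective {p : V →ₗ[R] U} {i : U →ₗ[R] W}
    (hp : Surjective p) (hi : Injective i) : finrank R (range (i ∘ₗ p)) = finrank R U := by
  rw [range_comp_of_range_eq_top _ (range_eq_top.2 hp), finrank_range_of_inj hi]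

noncomputable def factorizationsEquiv (f : V →ₗ[R] W) :
    {x : (V →ₗ[R] U) × (U →ₗ[R] W) // Surjective x.1 ∧ Injective x.2 ∧ x.2 ∘ₗ x.1 = f} ≃
      (U ≃ₗ[R] range f) where
  toFun x := (LinearEquiv.ofInjective x.1.2 x.2.2.1).trans <| LinearEquiv.ofEq _ _ <|
    (range_comp_of_range_eq_top _ (range_eq_top.2 x.2.1)).symm.trans (congrArg range x.2.2.2)
  invFun e := ⟨(e.symm.toLinearMap ∘ₗ f.rangeRestrict, (range f).subtype ∘ₗ e.toLinearMap),
    e.symm.surjective.comp f.surjective_rangeRestrict,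
    (range f).injective_subtype.comp e.injective, by ext; simp⟩
  left_inv := by
    rintro ⟨⟨p, i⟩, hp, hi, rfl⟩
    refine Subtype.ext (Prod.ext (LinearMap.ext fun x => ?_) (LinearMap.ext fun u => ?_))
    · rw [LinearMap.comp_apply, LinearEquiv.coe_coe, LinearEquiv.symm_apply_eq]
      exact Subtype.ext (by simp)
    · simp
  right_inv e := by
    ext u
    simp

def factorizationsSigmaEquiv :
    {x : (V →ₗ[R] U) × (U →ₗ[R] W) // Surjective x.1 ∧ Injective x.2} ≃
      Σ f : {f : V →ₗ[R] W // finrank R (range f) = finrank R U},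
        {x : (V →ₗ[R] U) × (U →ₗ[R] W) // Surjective x.1 ∧ Injective x.2 ∧ x.2 ∘ₗ x.1 = f} where
  toFun x := ⟨⟨x.1.2 ∘ₗ x.1.1, finrank_range_comp_of_surjective_of_injective x.2.1 x.2.2⟩,
    ⟨x.1, x.2.1, x.2.2, rfl⟩⟩
  invFun y := ⟨y.2.1, y.2.2.1, y.2.2.2.1⟩
  left_inv _ := rfl
  right_inv := by
    rintro ⟨⟨f, hf⟩, x, hp, hi, hx⟩
    dsimp only at hx
    subst hx
    rfl

end Ring

section Field

variable {K U V W : Type*} [Field K] [AddCommGroup U] [Module K U] [AddCommGroup V] [Module K V]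
  [AddCommGroup W] [Module K W]

theorem card_surjective_mul_card_injective [FiniteDimensional K U] [FiniteDimensional K V] :
    Nat.card {p : V →ₗ[K] U // Surjective p} * Nat.card {i : U →ₗ[K] W // Injective i} =
      Nat.card {f : V →ₗ[K] W // finrank K (range f) = finrank K U} * Nat.card (U ≃ₗ[K] U) := by
  let retarget (f : {f : V →ₗ[K] W // finrank K (range f) = finrank K U}) :
      (U ≃ₗ[K] range f.1) ≃ (U ≃ₗ[K] U) :=
    let e : range f.1 ≃ₗ[K] U := LinearEquiv.ofFinrankEq _ _ f.2
    { toFun := fun g => g.trans e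
      invFun := fun g => g.trans e.symm
      left_inv := fun g => by ext; simp
      right_inv := fun g => by ext; simp }
  rw [← Nat.card_prod, ← Nat.card_prod]
  exact Nat.card_congr <| Equiv.subtypeProdEquivProd.symm.trans <| factorizationsSigmaEquiv.trans <|
    (Equiv.sigmaCongrRight fun f => (factorizationsEquiv f.1).trans (retarget f)).trans
      (Equiv.sigmaEquivProd _ _)

theorem Module.Dual.transpose_bijective [FiniteDimensional K U] [FiniteDimensional K V] :
    Bijective (Module.Dual.transpose (R := K) (M := V) (M' := U)) := by
  have hinj : Function.Injective (Module.Dual.transpose (R := K) (M := V) (M' := U)) := fun p p' h =>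
    (Module.dualMap_dualMap_eq_iff _ _).1 (congrArg LinearMap.dualMap h)
  have hrank : finrank K (V →ₗ[K] U) = finrank K (Dual K U →ₗ[K] Dual K V) := by
    simp [finrank_linearMap, mul_comm]
  exact ⟨hinj, (injective_iff_surjective_of_finrank_eq_finrank (V := V →ₗ[K] U)
    (V₂ := Dual K U →ₗ[K] Dual K V) hrank).1 hinj⟩

variable [Fintype K]

theorem card_injective_linearMap [FiniteDimensional K U] [FiniteDimensional K W]
    (h : finrank K U ≤ finrank K W) :
    Nat.card {i : U →ₗ[K] W // Injective i} =
      ∏ j ∈ Finset.range (finrank K U), (Fintype.card K ^ finrank K W - Fintype.card K ^ j) := by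
  have := Module.finite_of_finite K (M := W)
  let b := Module.finBasis K U
  have hconstr (s : Fin (finrank K U) → W) : b.constr K s ∘ b = s :=
    funext (b.constr_basis K s)
  rw [← Fin.prod_univ_eq_prod_range (fun j => Fintype.card K ^ finrank K W - Fintype.card K ^ j),
    ← card_linearIndependent h]
  exact Nat.card_congr <| ((b.constr K).toEquiv.subtypeEquiv fun s => by
    rw [LinearEquiv.coe_toEquiv, injective_iff_linearIndependent_comp_basis b, hconstr]).symm

theorem card_surjective_linearMap [FiniteDimensional K U] [FiniteDimensional K V]
    (h : finrank K U ≤ finrank K V) :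
    Nat.card {p : V →ₗ[K] U // Surjective p} =
      ∏ j ∈ Finset.range (finrank K U), (Fintype.card K ^ finrank K V - Fintype.card K ^ j) := by
  have e : {p : V →ₗ[K] U // Surjective p} ≃ {g : Dual K U →ₗ[K] Dual K V // Injective g} :=
    (Equiv.ofBijective _ Module.Dual.transpose_bijective).subtypeEquiv fun _ =>
      dualMap_injective_iff.symm
  rw [Nat.card_congr e, card_injective_linearMap] <;>
    simp only [Subspace.dual_finrank_eq, h]

theorem card_linearEquiv_self [FiniteDimensional K U] :
    Nat.card (U ≃ₗ[K] U) =
      ∏ j ∈ Finset.range (finrank K U), (Fintype.card K ^ finrank K U - Fintype.card K ^ j) := by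
  rw [← card_injective_linearMap le_rfl]
  exact Nat.card_congr
    { toFun := fun e => ⟨e, e.injective⟩
      invFun := fun i => LinearEquiv.ofInjectiveEndo i.1 i.2
      left_inv := fun _ => by ext; rfl
      right_inv := fun _ => rfl }

end Field

theorem card_rank_r_linear_maps
    (F : Type*) [Field F] [Fintype F] (q m n r : ℕ) (hq : Fintype.card F = q)
    (hr : r ≤ min m n) :
    Nat.card {f : (Fin m → F) →ₗ[F] (Fin n → F) //
        Module.finrank F (LinearMap.range f) = r} *
      (∏ i ∈ Finset.range r, (q ^ r - q ^ i)) =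
    (∏ i ∈ Finset.range r, (q ^ m - q ^ i)) * (∏ i ∈ Finset.range r, (q ^ n - q ^ i)) := by
  subst hq
  have hU : finrank F (Fin r → F) = r := finrank_fin_fun F
  have key :=
    card_surjective_mul_card_injective (K := F) (U := Fin r → F) (V := Fin m → F) (W := Fin n → F)
  rw [card_surjective_linearMap, card_injective_linearMap, card_linearEquiv_self] at key
  · simpa only [hU, finrank_fin_fun] using key.symm
  all_goals simp only [hU, finrank_fin_fun]; omega
end

section
/- Let k be a field, V and W finite-dimensional k-vector spaces, and let (f, g) be a nilpotent pair, i.e. f : V →ₗ[k] W, g : W →ₗ[k] V with g ∘ f nilpotent. If v ∈ V is balanced, then every vector u in the subspace T[v] is balanced. -/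
/-- `orbitSpan T v` is the submodule `T[v]` spanned by `{T^i v : i ∈ ℕ}`. -/
def orbitSpan {k V : Type*} [Field k] [AddCommGroup V] [Module k V]
    (T : V →ₗ[k] V) (v : V) : Submodule k V :=
  Submodule.span k (Set.range fun i : ℕ => (T ^ i) v)

/-!
Since `f ∘ (g ∘ f)^i = (f ∘ g)^i ∘ f`, the map `f` sends `T[v]` onto `T'[f v]`. Hence, by
rank–nullity, `v` is balanced exactly when `f` is injective on `T[v]`. For `u ∈ T[v]` the
subspace `T[u]` lies in `T[v]`, so `f` is injective on it as well.
-/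

open Module LinearMap

section RankNullity

variable {K V W : Type*} [DivisionRing K] [AddCommGroup V] [Module K V]
  [AddCommGroup W] [Module K W] (f : V →ₗ[K] W) {p q : Submodule K V}

theorem finrank_map_of_disjoint_ker (h : Disjoint p (ker f)) :
    finrank K (p.map f) = finrank K p := by
  rw [← range_domRestrict]
  exact finrank_range_of_inj (injective_domRestrict_iff.mpr h)

theorem disjoint_ker_of_finrank_map_eq [FiniteDimensional K p]
    (h : finrank K (p.map f) = finrank K p) : Disjoint p (ker f) := by
  have hrn := (f.domRestrict p).finrank_range_add_finrank_ker
  rwa [range_domRestrict, h, add_eq_left, Submodule.finrank_eq_zero, ker_eq_bot,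
    injective_domRestrict_iff] at hrn

theorem finrank_map_eq_of_le_of_finrank_map_eq [FiniteDimensional K p] (hqp : q ≤ p)
    (h : finrank K (p.map f) = finrank K p) : finrank K (q.map f) = finrank K q :=
  finrank_map_of_disjoint_ker f ((disjoint_ker_of_finrank_map_eq f h).mono_left hqp)

end RankNullity

section OrbitSpan

variable {K V W : Type*} [Field K] [AddCommGroup V] [Module K V] [AddCommGroup W] [Module K W]

theorem map_orbitSpan_of_comp_eq (f : V →ₗ[K] W) {S : End K V} {T : End K W}
    (h : T ∘ₗ f = f ∘ₗ S) (v : V) :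
    (orbitSpan S v).map f = orbitSpan T (f v) := by
  have hpow : f ∘ (fun i : ℕ => (S ^ i) v) = fun i => (T ^ i) (f v) :=
    funext fun i => (congr($(End.commute_pow_left_of_commute h i) v)).symm
  rw [orbitSpan, orbitSpan, Submodule.map_span, ← Set.range_comp, hpow]

theorem map_orbitSpan_comp (f : V →ₗ[K] W) (g : W →ₗ[K] V) (v : V) :
    (orbitSpan (g ∘ₗ f) v).map f = orbitSpan (f ∘ₗ g) (f v) :=
  map_orbitSpan_of_comp_eq f rfl v

theorem orbitSpan_le_of_mem {T : End K V} {u v : V} (hu : u ∈ orbitSpan T v) :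
    orbitSpan T u ≤ orbitSpan T v := by
  refine Submodule.span_le.mpr ?_
  rintro _ ⟨i, rfl⟩
  have hinv : orbitSpan T v ≤ (orbitSpan T v).comap (T ^ i) := by
    refine Submodule.span_le.mpr ?_
    rintro _ ⟨j, rfl⟩
    exact Submodule.subset_span ⟨i + j, by simp only [pow_add, End.mul_apply]⟩
  exact hinv hu

end OrbitSpan

theorem balanced_of_mem_orbitSpan_of_balanced_general
    (k V W : Type*) [Field k] [AddCommGroup V] [Module k V] [FiniteDimensional k V]
    [AddCommGroup W] [Module k W]
    (f : V →ₗ[k] W) (g : W →ₗ[k] V)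
    (v : V)
    (hv : Module.finrank k (orbitSpan (g ∘ₗ f) v) =
      Module.finrank k (orbitSpan (f ∘ₗ g) (f v)))
    (u : V) (hu : u ∈ orbitSpan (g ∘ₗ f) v) :
    Module.finrank k (orbitSpan (g ∘ₗ f) u) =
      Module.finrank k (orbitSpan (f ∘ₗ g) (f u)) := by
  rw [← map_orbitSpan_comp] at hv ⊢
  exact (finrank_map_eq_of_le_of_finrank_map_eq f (orbitSpan_le_of_mem hu) hv.symm).symm

theorem balanced_of_mem_orbitSpan_of_balanced
    (k V W : Type*) [Field k] [AddCommGroup V] [Module k V] [FiniteDimensional k V]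
    [AddCommGroup W] [Module k W] [FiniteDimensional k W]
    (f : V →ₗ[k] W) (g : W →ₗ[k] V) (hnil : IsNilpotent (g ∘ₗ f))
    (v : V)
    (hv : Module.finrank k (orbitSpan (g ∘ₗ f) v) =
      Module.finrank k (orbitSpan (f ∘ₗ g) (f v)))
    (u : V) (hu : u ∈ orbitSpan (g ∘ₗ f) v) :
    Module.finrank k (orbitSpan (g ∘ₗ f) u) =
      Module.finrank k (orbitSpan (f ∘ₗ g) (f u)) :=
  balanced_of_mem_orbitSpan_of_balanced_general k V W f g v hv u hu
end

section
/- Let k be a field, V and W finite-dimensional k-vector spaces, and let (f, g) be a nilpotent pair, i.e. f : V →ₗ[k] W, g : W →ₗ[k] V with g ∘ f nilpotent. If v ∈ V is balanced and f v ≠ 0, then the vector f v ∈ W is unbalanced, i.e. dim T[g (f v)] + 1 = dim T'[f v]. -/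
/-!
With `T = g ∘ f`, the balance of `v` says `dim T'[f v] = dim T[v]`, so it suffices to show
`dim T[T v] + 1 = dim T[v]` for `v ≠ 0` with `T` nilpotent. Now `T[v] = k ∙ v ⊔ T[T v]`, and
`v ∉ T[T v]`: if `m` is the largest exponent with `T^m v ≠ 0`, then `T^m` kills `T[T v]`.
-/

open Submodule

theorem Submodule.finrank_sup_span_singleton_of_notMem {K V : Type*} [DivisionRing K]
    [AddCommGroup V] [Module K V] {p : Submodule K V} [FiniteDimensional K p] {v : V}
    (hv : v ∉ p) : Module.finrank K ↥(p ⊔ K ∙ v) = Module.finrank K p + 1 := by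
  have hv0 : v ≠ 0 := fun h => hv (h ▸ p.zero_mem)
  have := finrank_sup_add_finrank_inf_eq p (K ∙ v)
  rwa [(disjoint_span_singleton_of_notMem hv).eq_bot, finrank_bot, add_zero,
    finrank_span_singleton hv0] at this

theorem Module.End.exists_pow_apply_ne_zero_and_pow_succ_apply_eq_zero {R M : Type*}
    [Semiring R] [AddCommMonoid M] [Module R M] {T : Module.End R M} {v : M} (hv : v ≠ 0)
    {n : ℕ} (h : (T ^ n) v = 0) : ∃ m, (T ^ m) v ≠ 0 ∧ (T ^ (m + 1)) v = 0 := by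
  by_contra! hall
  exact Nat.rec (motive := fun m => (T ^ m) v ≠ 0) hv (fun m ih => hall m ih) n h

section orbitSpan

variable {k V : Type*} [Field k] [AddCommGroup V] [Module k V] {T : V →ₗ[k] V} {v : V}

variable (T) in
theorem orbitSpan_eq_span_singleton_sup (v : V) :
    orbitSpan T v = (k ∙ v) ⊔ orbitSpan T (T v) := by
  have hrange : Set.range (fun i : ℕ => (T ^ i) v) =
      insert v (Set.range fun i : ℕ => (T ^ i) (T v)) := by
    rw [← Set.singleton_union, ← Nat.range_of_succ]
    simp [Function.comp_def, pow_succ]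
  rw [orbitSpan, orbitSpan, hrange, span_insert]

variable (T) in
@[simp]
theorem orbitSpan_zero : orbitSpan T (0 : V) = ⊥ := by
  simp [orbitSpan]

theorem finiteDimensional_orbitSpan_of_pow_apply_eq_zero {n : ℕ} (h : (T ^ n) v = 0) :
    FiniteDimensional k (orbitSpan T v) := by
  induction n generalizing v with
  | zero =>
    rw [pow_zero, Module.End.one_apply] at h
    rw [h, orbitSpan_zero]
    infer_instance
  | succ n ih =>
    have := ih (v := T v) (by rwa [← Module.End.mul_apply, ← pow_succ])
    rw [orbitSpan_eq_span_singleton_sup]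
    infer_instance

theorem orbitSpan_apply_le_ker_pow_of_pow_succ_apply_eq_zero {m : ℕ} (h : (T ^ (m + 1)) v = 0) :
    orbitSpan T (T v) ≤ LinearMap.ker (T ^ m) := by
  rw [orbitSpan, span_le]
  rintro _ ⟨i, rfl⟩
  have hcomm : (T ^ m) ((T ^ i) (T v)) = (T ^ i) ((T ^ (m + 1)) v) := by
    simp only [← Module.End.mul_apply, ← pow_succ, ← pow_add]
    congr 2
    omega
  rw [SetLike.mem_coe, LinearMap.mem_ker, hcomm, h, map_zero]

theorem notMem_orbitSpan_apply_of_pow_apply_eq_zero (hv : v ≠ 0) {n : ℕ} (h : (T ^ n) v = 0) :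
    v ∉ orbitSpan T (T v) := by
  obtain ⟨m, hm, hm1⟩ := Module.End.exists_pow_apply_ne_zero_and_pow_succ_apply_eq_zero hv h
  exact fun hmem => hm (orbitSpan_apply_le_ker_pow_of_pow_succ_apply_eq_zero hm1 hmem)

theorem finrank_orbitSpan_apply_add_one (hv : v ≠ 0) {n : ℕ} (h : (T ^ n) v = 0) :
    Module.finrank k (orbitSpan T (T v)) + 1 = Module.finrank k (orbitSpan T v) := by
  have : FiniteDimensional k (orbitSpan T (T v)) :=
    finiteDimensional_orbitSpan_of_pow_apply_eq_zero (n := n) (by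
      rw [← Module.End.mul_apply, ← pow_succ, pow_succ', Module.End.mul_apply, h, map_zero])
  rw [orbitSpan_eq_span_singleton_sup T v, sup_comm,
    finrank_sup_span_singleton_of_notMem (notMem_orbitSpan_apply_of_pow_apply_eq_zero hv h)]

end orbitSpan

theorem image_of_balanced_is_unbalanced_general
    (k V W : Type*) [Field k] [AddCommGroup V] [Module k V]
    [AddCommGroup W] [Module k W]
    (f : V →ₗ[k] W) (g : W →ₗ[k] V) (hnil : IsNilpotent (g ∘ₗ f))
    (v : V)
    (hv : Module.finrank k (orbitSpan (g ∘ₗ f) v) =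
      Module.finrank k (orbitSpan (f ∘ₗ g) (f v)))
    (hfv : f v ≠ 0) :
    Module.finrank k (orbitSpan (g ∘ₗ f) (g (f v))) + 1 =
      Module.finrank k (orbitSpan (f ∘ₗ g) (f v)) := by
  obtain ⟨n, hn⟩ := hnil
  have hv0 : v ≠ 0 := fun h => hfv (h ▸ map_zero f)
  rw [← hv]
  exact finrank_orbitSpan_apply_add_one hv0 (n := n) (by rw [hn, LinearMap.zero_apply])

theorem image_of_balanced_is_unbalanced
    (k V W : Type*) [Field k] [AddCommGroup V] [Module k V] [FiniteDimensional k V]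
    [AddCommGroup W] [Module k W] [FiniteDimensional k W]
    (f : V →ₗ[k] W) (g : W →ₗ[k] V) (hnil : IsNilpotent (g ∘ₗ f))
    (v : V)
    (hv : Module.finrank k (orbitSpan (g ∘ₗ f) v) =
      Module.finrank k (orbitSpan (f ∘ₗ g) (f v)))
    (hfv : f v ≠ 0) :
    Module.finrank k (orbitSpan (g ∘ₗ f) (g (f v))) + 1 =
      Module.finrank k (orbitSpan (f ∘ₗ g) (f v)) :=
  image_of_balanced_is_unbalanced_general k V W f g hnil v hv hfv
end

section
/- Let k be a field, V and W finite-dimensional k-vector spaces, and let (f, g) be a nilpotent pair, i.e. f : V →ₗ[k] W, g : W →ₗ[k] V with g ∘ f nilpotent. If v ∈ V is unbalanced, then the vector f v ∈ W is balanced, i.e. dim T'[f v] = dim T[g (f v)]. -/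
section

variable {k V W : Type*} [Field k] [AddCommGroup V] [Module k V] [AddCommGroup W] [Module k W]

theorem LinearMap.pow_comp_apply_eq_apply_pow_comp (f : V →ₗ[k] W) (g : W →ₗ[k] V) (i : ℕ)
    (x : V) : ((f ∘ₗ g) ^ i) (f x) = f (((g ∘ₗ f) ^ i) x) := by
  induction i with
  | zero => rfl
  | succ n ih => rw [pow_succ', Module.End.mul_apply, ih, pow_succ', Module.End.mul_apply]; rfl

namespace orbitSpan

theorem map_comp (f : V →ₗ[k] W) (g : W →ₗ[k] V) (v : V) :
    (orbitSpan (g ∘ₗ f) v).map f = orbitSpan (f ∘ₗ g) (f v) := by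
  simp only [orbitSpan, Submodule.map_span, ← Set.range_comp, Function.comp_def,
    LinearMap.pow_comp_apply_eq_apply_pow_comp]

theorem eq_span_singleton_sup (T : V →ₗ[k] V) (v : V) :
    orbitSpan T v = (k ∙ v) ⊔ orbitSpan T (T v) := by
  rw [orbitSpan, ← Nat.range_of_succ, Submodule.span_union, pow_zero, Module.End.one_apply,
    orbitSpan]
  simp only [Function.comp_def, pow_succ, Module.End.mul_apply]

theorem apply_le (T : V →ₗ[k] V) (v : V) : orbitSpan T (T v) ≤ orbitSpan T v := by
  rw [eq_span_singleton_sup T v]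
  exact le_sup_right

theorem finrank_le_finrank_apply_add_one (T : V →ₗ[k] V) (v : V)
    [Module.Finite k (orbitSpan T v)] :
    Module.finrank k (orbitSpan T v) ≤ Module.finrank k (orbitSpan T (T v)) + 1 := by
  have : FiniteDimensional k (orbitSpan T (T v)) :=
    Submodule.finiteDimensional_of_le (apply_le T v)
  have hline : Module.finrank k (k ∙ v) ≤ 1 := by
    simpa using finrank_span_le_card (R := k) ({v} : Set V)
  calc Module.finrank k (orbitSpan T v)
      = Module.finrank k ((k ∙ v) ⊔ orbitSpan T (T v) : Submodule k V) := by
        rw [← eq_span_singleton_sup]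
    _ ≤ Module.finrank k (k ∙ v) + Module.finrank k (orbitSpan T (T v)) :=
        Submodule.finrank_add_le_finrank_add_finrank _ _
    _ ≤ Module.finrank k (orbitSpan T (T v)) + 1 := by omega

end orbitSpan

end

theorem image_of_unbalanced_is_balanced_general
    (k V W : Type*) [Field k] [AddCommGroup V] [Module k V]
    [AddCommGroup W] [Module k W]
    (f : V →ₗ[k] W) (g : W →ₗ[k] V)
    (v : V)
    (hv : Module.finrank k (orbitSpan (f ∘ₗ g) (f v)) + 1 =
      Module.finrank k (orbitSpan (g ∘ₗ f) v)) :
    Module.finrank k (orbitSpan (f ∘ₗ g) (f v)) =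
      Module.finrank k (orbitSpan (g ∘ₗ f) (g (f v))) := by
  have : Module.Finite k (orbitSpan (g ∘ₗ f) v) := Module.finite_of_finrank_pos (by omega)
  have hle : Module.finrank k (orbitSpan (g ∘ₗ f) (g (f v))) ≤
      Module.finrank k (orbitSpan (f ∘ₗ g) (f v)) := by
    rw [← orbitSpan.map_comp g f, ← orbitSpan.map_comp f g]
    exact Submodule.finrank_map_le _ _
  have hge := orbitSpan.finrank_le_finrank_apply_add_one (g ∘ₗ f) v
  rw [LinearMap.comp_apply] at hge
  omega

theorem image_of_unbalanced_is_balanced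
    (k V W : Type*) [Field k] [AddCommGroup V] [Module k V] [FiniteDimensional k V]
    [AddCommGroup W] [Module k W] [FiniteDimensional k W]
    (f : V →ₗ[k] W) (g : W →ₗ[k] V) (hnil : IsNilpotent (g ∘ₗ f))
    (v : V)
    (hv : Module.finrank k (orbitSpan (f ∘ₗ g) (f v)) + 1 =
      Module.finrank k (orbitSpan (g ∘ₗ f) v)) :
    Module.finrank k (orbitSpan (f ∘ₗ g) (f v)) =
      Module.finrank k (orbitSpan (g ∘ₗ f) (g (f v))) :=
  image_of_unbalanced_is_balanced_general k V W f g v hv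
end

section
/- Let k be a field, V and W finite-dimensional k-vector spaces, and let (f, g) be a nilpotent pair, i.e. f : V →ₗ[k] W, g : W →ₗ[k] V with g ∘ f nilpotent. If v ∈ V is balanced and v' ∈ V is unbalanced, then the intersection of the subspaces T[v] and T[v'] is the zero subspace: T[v] ⊓ T[v'] = ⊥. -/
section OrbitSpan

open Module Submodule

variable {k V W : Type*} [Field k] [AddCommGroup V] [Module k V] [AddCommGroup W] [Module k W]

theorem Submodule.finrank_map_add_finrank_inf_ker (p : Submodule k V) [FiniteDimensional k p]
    (f : V →ₗ[k] W) : finrank k (p.map f) + finrank k ↥(p ⊓ LinearMap.ker f) = finrank k p := by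
  have := (f.domRestrict p).finrank_range_add_finrank_ker
  rwa [LinearMap.range_domRestrict, LinearMap.ker_domRestrict, ← finrank_map_subtype_eq,
    map_comap_subtype] at this

theorem Submodule.eq_bot_of_disjoint_ker_of_isNilpotent {T : V →ₗ[k] V} (hT : IsNilpotent T)
    {U : Submodule k V} (hU : U.map T ≤ U) (hdisj : Disjoint U (LinearMap.ker T)) : U = ⊥ := by
  have disjoint_ker_pow : ∀ n : ℕ, Disjoint U (LinearMap.ker (T ^ n)) := by
    intro n
    induction n with
    | zero => simp [Module.End.one_eq_id]
    | succ n ih =>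
      rw [disjoint_def] at ih hdisj ⊢
      intro x hx hxn
      have hTx : T x = 0 := ih (T x) (hU (mem_map_of_mem hx)) <| by
        rwa [LinearMap.mem_ker, ← Module.End.mul_apply, ← pow_succ]
      exact hdisj x hx hTx
  obtain ⟨n, hn⟩ := hT
  simpa [hn] using disjoint_ker_pow n

theorem map_orbitSpan {T : V →ₗ[k] V} {T' : W →ₗ[k] W} {f : V →ₗ[k] W}
    (h : T' ∘ₗ f = f ∘ₗ T) (v : V) : (orbitSpan T v).map f = orbitSpan T' (f v) := by
  rw [orbitSpan, orbitSpan, map_span, ← Set.range_comp]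
  refine congrArg (span k ∘ Set.range) (funext fun i => ?_)
  exact (LinearMap.congr_fun (Module.End.commute_pow_left_of_commute h i) v).symm

theorem orbitSpan_apply_le (T : V →ₗ[k] V) (v : V) : orbitSpan T (T v) ≤ orbitSpan T v := by
  refine span_le.mpr ?_
  rintro _ ⟨i, rfl⟩
  refine subset_span ⟨i + 1, ?_⟩
  simp only [pow_succ, Module.End.mul_apply]

theorem map_orbitSpan_self_le (T : V →ₗ[k] V) (v : V) : (orbitSpan T v).map T ≤ orbitSpan T v :=
  (map_orbitSpan rfl v).trans_le (orbitSpan_apply_le T v)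

theorem orbitSpan_le_span_singleton_sup (T : V →ₗ[k] V) (v : V) :
    orbitSpan T v ≤ k ∙ v ⊔ orbitSpan T (T v) := by
  refine span_le.mpr ?_
  rintro _ ⟨_ | i, rfl⟩
  · exact mem_sup_left (mem_span_singleton_self v)
  · refine mem_sup_right (subset_span ⟨i, ?_⟩)
    simp only [pow_succ, Module.End.mul_apply]

theorem finrank_orbitSpan_inf_ker_le_one [FiniteDimensional k V] (T : V →ₗ[k] V) (v : V) :
    finrank k ↥(orbitSpan T v ⊓ LinearMap.ker T) ≤ 1 := by
  have hsplit := finrank_map_add_finrank_inf_ker (orbitSpan T v) T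
  rw [map_orbitSpan rfl] at hsplit
  have hle := finrank_mono (orbitSpan_le_span_singleton_sup T v)
  have hsup := finrank_add_le_finrank_add_finrank (k ∙ v) (orbitSpan T (T v))
  have hline : finrank k (k ∙ v) ≤ 1 := by simpa using finrank_span_le_card (R := k) {v}
  omega

section Intertwined

variable [FiniteDimensional k V] {T : V →ₗ[k] V} {T' : W →ₗ[k] W} {f : V →ₗ[k] W}

theorem orbitSpan_inf_ker_eq_bot_of_finrank_eq (h : T' ∘ₗ f = f ∘ₗ T) {v : V}
    (hv : finrank k (orbitSpan T v) = finrank k (orbitSpan T' (f v))) :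
    orbitSpan T v ⊓ LinearMap.ker f = ⊥ := by
  have hsplit := finrank_map_add_finrank_inf_ker (orbitSpan T v) f
  rw [map_orbitSpan h, ← hv] at hsplit
  exact finrank_eq_zero.mp (by omega)

theorem orbitSpan_inf_ker_le_ker_of_finrank_add_one_eq (h : T' ∘ₗ f = f ∘ₗ T)
    (hker : LinearMap.ker f ≤ LinearMap.ker T) {v : V}
    (hv : finrank k (orbitSpan T' (f v)) + 1 = finrank k (orbitSpan T v)) :
    orbitSpan T v ⊓ LinearMap.ker T ≤ LinearMap.ker f := by
  have hsplit := finrank_map_add_finrank_inf_ker (orbitSpan T v) f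
  rw [map_orbitSpan h] at hsplit
  have hdim := finrank_orbitSpan_inf_ker_le_one T v
  have heq : orbitSpan T v ⊓ LinearMap.ker f = orbitSpan T v ⊓ LinearMap.ker T :=
    eq_of_le_of_finrank_le (inf_le_inf_left _ hker) (by omega)
  exact heq ▸ inf_le_right

end Intertwined

end OrbitSpan

theorem balanced_unbalanced_orbitSpans_disjoint_general
    (k V W : Type*) [Field k] [AddCommGroup V] [Module k V] [FiniteDimensional k V]
    [AddCommGroup W] [Module k W]
    (f : V →ₗ[k] W) (g : W →ₗ[k] V) (hnil : IsNilpotent (g ∘ₗ f))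
    (v v' : V)
    (hv : Module.finrank k (orbitSpan (g ∘ₗ f) v) =
      Module.finrank k (orbitSpan (f ∘ₗ g) (f v)))
    (hv' : Module.finrank k (orbitSpan (f ∘ₗ g) (f v')) + 1 =
      Module.finrank k (orbitSpan (g ∘ₗ f) v')) :
    orbitSpan (g ∘ₗ f) v ⊓ orbitSpan (g ∘ₗ f) v' = ⊥ := by
  have hcomm : (f ∘ₗ g) ∘ₗ f = f ∘ₗ (g ∘ₗ f) := LinearMap.comp_assoc f g f
  have hinj := orbitSpan_inf_ker_eq_bot_of_finrank_eq hcomm hv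
  have hkill := orbitSpan_inf_ker_le_ker_of_finrank_add_one_eq hcomm
    (LinearMap.ker_le_ker_comp f g) hv'
  refine Submodule.eq_bot_of_disjoint_ker_of_isNilpotent hnil ?_ ?_
  · exact (Submodule.map_inf_le _).trans
      (inf_le_inf (map_orbitSpan_self_le _ v) (map_orbitSpan_self_le _ v'))
  · refine disjoint_iff_inf_le.mpr (hinj ▸ le_inf (inf_le_left.trans inf_le_left) ?_)
    exact (inf_le_inf_right _ inf_le_right).trans hkill

theorem balanced_unbalanced_orbitSpans_disjoint
    (k V W : Type*) [Field k] [AddCommGroup V] [Module k V] [FiniteDimensional k V]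
    [AddCommGroup W] [Module k W] [FiniteDimensional k W]
    (f : V →ₗ[k] W) (g : W →ₗ[k] V) (hnil : IsNilpotent (g ∘ₗ f))
    (v v' : V)
    (hv : Module.finrank k (orbitSpan (g ∘ₗ f) v) =
      Module.finrank k (orbitSpan (f ∘ₗ g) (f v)))
    (hv' : Module.finrank k (orbitSpan (f ∘ₗ g) (f v')) + 1 =
      Module.finrank k (orbitSpan (g ∘ₗ f) v')) :
    orbitSpan (g ∘ₗ f) v ⊓ orbitSpan (g ∘ₗ f) v' = ⊥ :=
  balanced_unbalanced_orbitSpans_disjoint_general k V W f g hnil v v' hv hv'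
end
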